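/- arXiv:2407.14907 — 2 statements merged into one kernel-verified Lean document; each statement's English description precedes it below -/
import Mathlib

section
/- For every Boolean conjunctive query Q and every finite set Σ of frontier-one TGDs, there exists a Monadic Datalog query R that is a certain-answer rewriting of Q with respect to Σ: for every instance I, R holds on I if and only if I ∧ Σ ⊨ Q. -/
namespace MonDetPaper

/-- Relation symbols (a schema is a finite set of these). -/
abbrev RelSym : Type := ℕ
/-- First-order variables. -/
abbrev Var : Type := ℕ

/-- An atom (or fact): a relation symbol together with a list of arguments. -/
abbrev Atom (α : Type) : Type := RelSym × List α

/-- An instance over domain `D`: a (possibly infinite) set of facts. -/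
abbrev Inst (D : Type) : Type := Set (Atom D)

/-- Apply a map on domain elements to an atom. -/
def mapAtom {α β : Type} (h : α → β) (a : Atom α) : Atom β := (a.1, a.2.map h)

/-- Image of an instance under a map on domain elements. -/
def mapInst {α β : Type} (h : α → β) (I : Inst α) : Inst β := (mapAtom h) '' I

/-- `h` is a homomorphism from `I` to `J`. -/
def isHom {α β : Type} (h : α → β) (I : Inst α) (J : Inst β) : Prop :=
  ∀ a ∈ I, mapAtom h a ∈ J

/-- The instance uses only relation symbols from schema `S`. -/
def overSchema {D : Type} (S : Finset RelSym) (I : Inst D) : Prop :=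
  ∀ a ∈ I, a.1 ∈ S

/-! ### Conjunctive queries -/

/-- A Boolean conjunctive query: a finite list of atoms over variables,
all of which are (implicitly) existentially quantified. -/
abbrev BCQ : Type := List (Atom Var)

def bcqHolds {D : Type} (q : BCQ) (I : Inst D) : Prop :=
  ∃ h : Var → D, ∀ a ∈ q, mapAtom h a ∈ I

def bcqOver (S : Finset RelSym) (q : BCQ) : Prop := ∀ a ∈ q, a.1 ∈ S

/-- The canonical database of a Boolean CQ. -/
def canondb (q : BCQ) : Inst Var := { a | a ∈ q }

/-- A conjunctive query with answer variables: a body together with the list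
of answer (free) variables. -/
abbrev CQ : Type := List (Atom Var) × List Var

def cqEval {D : Type} (q : CQ) (I : Inst D) : Set (List D) :=
  { t | ∃ h : Var → D, (∀ a ∈ q.1, mapAtom h a ∈ I) ∧ t = q.2.map h }

def cqOver (S : Finset RelSym) (q : CQ) : Prop := ∀ a ∈ q.1, a.1 ∈ S

/-- A union of conjunctive queries. -/
abbrev UCQ : Type := List CQ

def ucqEval {D : Type} (q : UCQ) (I : Inst D) : Set (List D) :=
  { t | ∃ d ∈ q, t ∈ cqEval d I }

def ucqOver (S : Finset RelSym) (q : UCQ) : Prop := ∀ d ∈ q, cqOver S d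

/-- A Boolean union of conjunctive queries. -/
abbrev BUCQ : Type := List BCQ

def bucqHolds {D : Type} (q : BUCQ) (I : Inst D) : Prop := ∃ d ∈ q, bcqHolds d I

def bucqOver (S : Finset RelSym) (q : BUCQ) : Prop := ∀ d ∈ q, bcqOver S d

/-! ### Datalog -/

/-- A Datalog rule: a head atom and a body (a list of atoms). -/
abbrev DatalogRule : Type := Atom Var × List (Atom Var)
abbrev DatalogProgram : Type := List DatalogRule
/-- A Datalog query: a program together with a distinguished goal predicate. -/
abbrev DatalogQuery : Type := DatalogProgram × RelSym

/-- The intensional predicates of a program: those appearing in rule heads. -/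
def isIDB (P : DatalogProgram) (r : RelSym) : Prop := ∃ ru ∈ P, ru.1.1 = r

def ruleHolds {D : Type} (r : DatalogRule) (J : Inst D) : Prop :=
  ∀ h : Var → D, (∀ a ∈ r.2, mapAtom h a ∈ J) → mapAtom h r.1 ∈ J

/-- The least extension of `I` satisfying all rules of `P`. -/
def dlFix {D : Type} (P : DatalogProgram) (I : Inst D) : Inst D :=
  ⋂₀ { J : Inst D | I ⊆ J ∧ ∀ r ∈ P, ruleHolds r J }

/-- Output of a Datalog query. -/
def dlEval {D : Type} (Q : DatalogQuery) (I : Inst D) : Set (List D) :=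
  { t | (Q.2, t) ∈ dlFix Q.1 I }

/-- A Boolean Datalog query holds when the 0-ary goal fact is derived. -/
def dlHolds {D : Type} (Q : DatalogQuery) (I : Inst D) : Prop :=
  (Q.2, ([] : List D)) ∈ dlFix Q.1 I

/-- Well-formedness of a Datalog query over base (EDB) schema `S`:
head predicates are disjoint from `S`, body atoms are over `S` or intensional,
and the goal is intensional. -/
def dlOver (S : Finset RelSym) (Q : DatalogQuery) : Prop :=
  (∀ r ∈ Q.1, r.1.1 ∉ S ∧ ∀ a ∈ r.2, a.1 ∈ S ∨ isIDB Q.1 a.1) ∧ isIDB Q.1 Q.2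

/-- The goal predicate is 0-ary (Boolean query). -/
def dlBoolean (Q : DatalogQuery) : Prop :=
  ∀ r ∈ Q.1, r.1.1 = Q.2 → r.1.2 = []

/-- Monadic Datalog: every intensional predicate is unary
(except the 0-ary goal of a Boolean query). -/
def isMDL (Q : DatalogQuery) : Prop :=
  ∀ r ∈ Q.1, (r.1.1 = Q.2 ∧ r.1.2 = []) ∨ r.1.2.length = 1

/-- Frontier-guarded Datalog over EDB schema `S`: every rule body contains
an EDB atom containing all head variables. -/
def isFGDL (S : Finset RelSym) (Q : DatalogQuery) : Prop :=
  ∀ r ∈ Q.1, ∃ a ∈ r.2, a.1 ∈ S ∧ ∀ x ∈ r.1.2, x ∈ a.2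

/-- Extensionally-connected Datalog: in each rule, the graph on the head
variables whose edges join variables co-occurring in an EDB body atom
is connected. -/
def isEC (S : Finset RelSym) (Q : DatalogQuery) : Prop :=
  ∀ r ∈ Q.1, ∀ x ∈ r.1.2, ∀ y ∈ r.1.2,
    Relation.ReflTransGen (fun u v => ∃ a ∈ r.2, a.1 ∈ S ∧ u ∈ a.2 ∧ v ∈ a.2) x y

/-! ### Existential rules (TGDs) -/

/-- A tuple-generating dependency: body and head, each a list of atoms.
Head variables not occurring in the body are existentially quantified. -/
abbrev TGD : Type := List (Atom Var) × List (Atom Var)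

def varsIn (l : List (Atom Var)) : Set Var := { x | ∃ a ∈ l, x ∈ a.2 }

def tgdHolds {D : Type} (τ : TGD) (I : Inst D) : Prop :=
  ∀ h : Var → D, (∀ a ∈ τ.1, mapAtom h a ∈ I) →
    ∃ h' : Var → D, (∀ x ∈ varsIn τ.1, h' x = h x) ∧ ∀ a ∈ τ.2, mapAtom h' a ∈ I

def sigmaHolds {D : Type} (sg : List TGD) (I : Inst D) : Prop :=
  ∀ τ ∈ sg, tgdHolds τ I

def tgdOver (S : Finset RelSym) (τ : TGD) : Prop :=
  (∀ a ∈ τ.1, a.1 ∈ S) ∧ (∀ a ∈ τ.2, a.1 ∈ S)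

/-- The frontier: variables occurring both in body and head. -/
def frontier (τ : TGD) : Set Var := varsIn τ.1 ∩ varsIn τ.2

/-- A linear TGD has a single body atom. -/
def linearTGD (τ : TGD) : Prop := τ.1.length = 1

/-- A frontier-one TGD has (at most) one frontier variable. -/
def frontierOne (τ : TGD) : Prop := (frontier τ).Subsingleton

/-- A frontier-guarded TGD: some body atom contains all frontier variables. -/
def frontierGuarded (τ : TGD) : Prop := ∃ a ∈ τ.1, ∀ x ∈ frontier τ, x ∈ a.2

/-- A full TGD has no existentially quantified head variables. -/
def fullTGD (τ : TGD) : Prop := varsIn τ.2 ⊆ varsIn τ.1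

/-- A Unary Inclusion Dependency: a frontier-one linear TGD with no
repeated variables (and no constants). -/
def isUID (τ : TGD) : Prop :=
  linearTGD τ ∧ frontierOne τ ∧ (∀ a ∈ τ.1, a.2.Nodup) ∧ (∀ a ∈ τ.2, a.2.Nodup)

/-! ### Views -/

abbrev CQViews : Type := List (RelSym × CQ)
abbrev UCQViews : Type := List (RelSym × UCQ)
abbrev DLViews : Type := List (RelSym × DatalogQuery)

def cqViewImage {D : Type} (V : CQViews) (I : Inst D) : Inst D :=
  { a | ∃ vd ∈ V, vd.1 = a.1 ∧ a.2 ∈ cqEval vd.2 I }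

def ucqViewImage {D : Type} (V : UCQViews) (I : Inst D) : Inst D :=
  { a | ∃ vd ∈ V, vd.1 = a.1 ∧ a.2 ∈ ucqEval vd.2 I }

def dlViewImage {D : Type} (V : DLViews) (I : Inst D) : Inst D :=
  { a | ∃ vd ∈ V, vd.1 = a.1 ∧ a.2 ∈ dlEval vd.2 I }

/-! ### Monotonic determinacy and rewritings -/

/-- `holdsQ` is monotonically determined over the views (given by the view-image
operator `vim`) with respect to the rules `sg`, over all (possibly infinite)
instances over schema `S`. -/
def monDet (S : Finset RelSym)
    (holdsQ : (D : Type) → Inst D → Prop)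
    (vim : (D : Type) → Inst D → Inst D)
    (sg : List TGD) : Prop :=
  ∀ (D : Type) (I I' : Inst D), overSchema S I → overSchema S I' →
    sigmaHolds sg I → sigmaHolds sg I' →
    vim D I ⊆ vim D I' → holdsQ D I → holdsQ D I'

/-- Monotonic determinacy over finite instances. -/
def monDetFin (S : Finset RelSym)
    (holdsQ : (D : Type) → Inst D → Prop)
    (vim : (D : Type) → Inst D → Inst D)
    (sg : List TGD) : Prop :=
  ∀ (D : Type) (I I' : Inst D), I.Finite → I'.Finite →
    overSchema S I → overSchema S I' →
    sigmaHolds sg I → sigmaHolds sg I' →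
    vim D I ⊆ vim D I' → holdsQ D I → holdsQ D I'

/-- `holdsR` (a Boolean query over the view schema) is a rewriting of the
Boolean query `holdsQ` w.r.t. the views `vim` and rules `sg`:
on every instance satisfying the rules, evaluating the rewriting on the view
image gives the value of the query. -/
def isRewriting (S : Finset RelSym)
    (holdsQ : (D : Type) → Inst D → Prop)
    (vim : (D : Type) → Inst D → Inst D)
    (sg : List TGD)
    (holdsR : (D : Type) → Inst D → Prop) : Prop :=
  ∀ (D : Type) (I : Inst D), overSchema S I → sigmaHolds sg I →
    (holdsR D (vim D I) ↔ holdsQ D I)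

/-- The finite-instance variant of being a rewriting. -/
def isRewritingFin (S : Finset RelSym)
    (holdsQ : (D : Type) → Inst D → Prop)
    (vim : (D : Type) → Inst D → Inst D)
    (sg : List TGD)
    (holdsR : (D : Type) → Inst D → Prop) : Prop :=
  ∀ (D : Type) (I : Inst D), I.Finite → overSchema S I → sigmaHolds sg I →
    (holdsR D (vim D I) ↔ holdsQ D I)

/-! ### Universal models (the chase), certain answers -/

/-- `C` (with embedding `ι` of the domain of `I`) is a chase/universal model of
`I` with respect to the rules `sg`: it contains a homomorphic image of `I`,
satisfies the rules, and maps homomorphically (compatibly) into every instance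
satisfying the rules and containing a homomorphic image of `I`. -/
def isUnivModel (sg : List TGD) {D E : Type} (I : Inst D) (C : Inst E) (ι : D → E) : Prop :=
  isHom ι I C ∧ sigmaHolds sg C ∧
  ∀ (F : Type) (J : Inst F) (f : D → F), isHom f I J → sigmaHolds sg J →
    ∃ g : E → F, isHom g C J ∧ ∀ d, g (ι d) = f d

/-- `I ∧ sg ⊨ Q`: the Boolean query `holdsQ` holds in every instance (over `S`)
containing (a copy of) `I` and satisfying the rules `sg`. -/
def certain (S : Finset RelSym) (sg : List TGD)
    (holdsQ : (E : Type) → Inst E → Prop) {D : Type} (I : Inst D) : Prop :=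
  ∀ (E : Type) (e : D → E), Function.Injective e →
    ∀ J : Inst E, overSchema S J → mapInst e I ⊆ J → sigmaHolds sg J → holdsQ E J

/-! ### CQ approximations of a Datalog query -/

/-- A CQ approximation of Datalog query `Q`: a Boolean CQ over the base schema
contained in `Q` (Datalog queries are unions of their CQ approximations). -/
def isCQApprox (S : Finset RelSym) (Q : DatalogQuery) (q : BCQ) : Prop :=
  bcqOver S q ∧
  ∀ (D : Type) (I : Inst D), overSchema S I → bcqHolds q I → dlHolds Q I

/-! ### Backward view mapping for UCQ views -/

/-- Assignment used to instantiate the chosen CQ disjunct `q` for the view fact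
`a`: answer variables are identified with the corresponding entries of the fact
tuple, all other variables become fresh nulls tagged by `a`. -/
def backAssign {D : Type} (a : Atom D) (q : CQ) (x : Var) : D ⊕ (Atom D × Var) :=
  if x ∈ q.2 then
    match a.2[q.2.idxOf x]? with
    | some d => Sum.inl d
    | none => Sum.inr (a, x)
  else Sum.inr (a, x)

/-- `BackV_V(J)`: the set of base-schema instances obtained by choosing, for
each view fact of `J`, one CQ disjunct of the corresponding view definition and
adding its canonical database, with answer variables identified with the fact's
tuple and all other variables replaced by fresh nulls. -/
def backV {D : Type} (V : UCQViews) (J : Inst D) : Set (Inst (D ⊕ (Atom D × Var))) :=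
  { K | ∃ choice : Atom D → CQ,
      (∀ a ∈ J, ∃ vd ∈ V, vd.1 = a.1 ∧ choice a ∈ vd.2 ∧ (choice a).2.length = a.2.length) ∧
      K = { b | ∃ a ∈ J, ∃ c ∈ (choice a).1, b = mapAtom (backAssign a (choice a)) c } }

/-! ### Q-entailing view instances -/

/-- A view-schema instance `J` is Q-entailing w.r.t. rules `sg` and the views
(given by view image operator `vim`): every instance over `S` satisfying the
rules whose view image contains (a copy of) `J` satisfies the query. -/
def qEntailing (S : Finset RelSym) (sg : List TGD)
    (vim : (E : Type) → Inst E → Inst E)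
    (holdsQ : (E : Type) → Inst E → Prop)
    {D : Type} (J : Inst D) : Prop :=
  ∀ (E : Type) (e : D → E), Function.Injective e →
    ∀ I : Inst E, overSchema S I → sigmaHolds sg I →
      mapInst e J ⊆ vim E I → holdsQ E I


/-!
The rewriting uses unary IDB predicates `⟦p⟧` indexed by *judgments* `p = (r, v)`: a CQ `r`
of bounded size over a fixed finite stock of variables, pinned at one variable `v`. The intended
meaning of `⟦p⟧(d)` is that `r` holds in every model of `I ∧ Σ` with `v ↦ d`. The program
consists of all rules of bounded size that are sound for this intended meaning, so one direction
of the rewriting property is automatic.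

For the other direction we chase `I` with a chase that attaches every new bag to the single image
of the frontier variable, so that the chase is a forest of trees hanging off the elements of `I`.
A match of a judgment in the chase splits into the atoms matched in `I` and, for each tree, a
group of atoms matched inside that tree and touching the rest only at the root. The judgment is
therefore derived from its `I`-atoms and the judgments of its groups (a *split* rule). A group
matched inside the tree below `d` is in turn a consequence of all the judgments that held at `d`
one chase stage earlier (a *context* rule): every model of `Σ` realising these judgments at `d`
admits a homomorphism of the whole tree below `d`, built stage by stage, because each bag of the
tree was triggered by atoms inside the tree together with atoms meeting it only in `d`, and the
latter form a judgment that held at `d` earlier. Induction on the chase stage concludes.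
-/

noncomputable section

open scoped Classical

lemma mapAtom_comp {α β γ : Type} (f : α → β) (g : β → γ) (a : Atom α) :
    mapAtom g (mapAtom f a) = mapAtom (g ∘ f) a := by
  simp [mapAtom, List.map_map]

lemma mapAtom_congr {α β : Type} {f g : α → β} {a : Atom α}
    (h : ∀ x ∈ a.2, f x = g x) : mapAtom f a = mapAtom g a :=
  congrArg _ (List.map_congr_left h)

lemma mapAtom_injective {α β : Type} {f : α → β} (hf : Function.Injective f) :
    Function.Injective (mapAtom f) := by
  rintro ⟨r, l⟩ ⟨r', l'⟩ he
  simp only [mapAtom, Prod.mk.injEq] at he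
  exact Prod.ext he.1 (List.map_injective_iff.mpr hf he.2)

lemma finite_setOf_length_le_of_forall_mem {α : Type*} {s : Set α} (hs : s.Finite) (n : ℕ) :
    {l : List α | l.length ≤ n ∧ ∀ a ∈ l, a ∈ s}.Finite := by
  have := hs.to_subtype
  refine ((List.finite_length_le s n).image (List.map Subtype.val)).subset ?_
  rintro l ⟨hl, hmem⟩
  lift l to List s using hmem
  exact ⟨l, by simpa using hl, rfl⟩

def pinnedHolds {E : Type} (J : Inst E) (r : BCQ) (v : Var) (x : E) : Prop :=
  ∃ h : Var → E, (∀ a ∈ r, mapAtom h a ∈ J) ∧ h v = x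

lemma pinnedHolds.repin {E : Type} {J : Inst E} {r : BCQ} {v : Var} {x : E}
    (h : pinnedHolds J r v x) (hv : v ∉ varsIn r) (x' : E) : pinnedHolds J r v x' := by
  obtain ⟨f, hf, -⟩ := h
  refine ⟨Function.update f v x', fun a ha => ?_, by simp⟩
  rw [mapAtom_congr (g := f) fun z hz =>
    Function.update_of_ne (by rintro rfl; exact hv ⟨a, ha, hz⟩) _ _]
  exact hf a ha

variable (S : Finset RelSym) (q : BCQ) (sg : List TGD)

def queryAtoms : List (Atom Var) := q ++ sg.flatMap (fun τ => τ.1 ++ τ.2)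

def varBound : ℕ := ((queryAtoms q sg).flatMap (·.2)).sum + 1

def pinVar : Var := varBound q sg

def globalVar : Var := varBound q sg + 1

def poolVars : Finset Var := insert (pinVar q sg) ((queryAtoms q sg).flatMap (·.2)).toFinset

def maxLen : ℕ := q.length + (sg.map (·.1.length)).sum

def maxArity : ℕ := ((queryAtoms q sg).map (·.2.length)).sum

def ruleVars : Finset Var := insert (globalVar q sg) (poolVars q sg)

def poolAtoms : Set (Atom Var) :=
  {a | a.1 ∈ S ∧ a.2.length ≤ maxArity q sg ∧ ∀ x ∈ a.2, x ∈ poolVars q sg}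

def poolQueries : Set BCQ := {r | r.length ≤ maxLen q sg ∧ ∀ a ∈ r, a ∈ poolAtoms S q sg}

def judgments : Set (BCQ × Var) := {p | p.1 ∈ poolQueries S q sg ∧ p.2 ∈ ruleVars q sg}

lemma poolAtoms_finite : (poolAtoms S q sg).Finite := by
  refine (S.finite_toSet.prod (finite_setOf_length_le_of_forall_mem
    (poolVars q sg).finite_toSet (maxArity q sg))).subset ?_
  rintro ⟨r, l⟩ ⟨h1, h2, h3⟩
  exact ⟨h1, h2, h3⟩

lemma judgments_finite : (judgments S q sg).Finite :=
  ((finite_setOf_length_le_of_forall_mem (poolAtoms_finite S q sg) _).prod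
    (ruleVars q sg).finite_toSet).subset fun _ h => h

variable {q sg} in
lemma lt_varBound_of_mem_queryAtoms {a : Atom Var} (ha : a ∈ queryAtoms q sg) {z : Var}
    (hz : z ∈ a.2) : z < varBound q sg :=
  Nat.lt_succ_of_le (List.le_sum_of_mem (List.mem_flatMap.mpr ⟨a, ha, hz⟩))

variable {q sg} in
lemma le_varBound_of_mem_poolVars {z : Var} (hz : z ∈ poolVars q sg) : z ≤ varBound q sg := by
  rcases Finset.mem_insert.mp hz with rfl | hz
  · rfl
  · obtain ⟨a, ha, hza⟩ := List.mem_flatMap.mp (List.mem_toFinset.mp hz)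
    exact (lt_varBound_of_mem_queryAtoms ha hza).le

variable {q sg} in
lemma mem_poolVars_of_mem_queryAtoms {a : Atom Var} (ha : a ∈ queryAtoms q sg) {z : Var}
    (hz : z ∈ a.2) : z ∈ poolVars q sg :=
  Finset.mem_insert_of_mem (List.mem_toFinset.mpr (List.mem_flatMap.mpr ⟨a, ha, hz⟩))

variable {q sg} in
lemma pinVar_not_mem_queryAtoms {a : Atom Var} (ha : a ∈ queryAtoms q sg) : pinVar q sg ∉ a.2 :=
  fun h => (lt_varBound_of_mem_queryAtoms ha h).false

lemma globalVar_not_mem_poolVars : globalVar q sg ∉ poolVars q sg := fun h => by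
  have := le_varBound_of_mem_poolVars h; simp [globalVar] at this

lemma globalVar_mem_ruleVars : globalVar q sg ∈ ruleVars q sg := Finset.mem_insert_self _ _

variable {q sg} in
lemma mem_ruleVars_of_mem_poolVars {z : Var} (hz : z ∈ poolVars q sg) : z ∈ ruleVars q sg :=
  Finset.mem_insert_of_mem hz

variable {q sg} in
lemma mem_queryAtoms_of_mem_query {a : Atom Var} (ha : a ∈ q) : a ∈ queryAtoms q sg := by
  simp [queryAtoms, ha]

variable {q sg} in
lemma mem_queryAtoms_of_mem_body {τ : TGD} (hτ : τ ∈ sg) {a : Atom Var} (ha : a ∈ τ.1) :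
    a ∈ queryAtoms q sg := by
  simp only [queryAtoms, List.mem_append, List.mem_flatMap]
  exact Or.inr ⟨τ, hτ, by simp [ha]⟩

variable {q sg} in
lemma length_le_maxArity {a : Atom Var} (ha : a ∈ queryAtoms q sg) :
    a.2.length ≤ maxArity q sg :=
  List.le_sum_of_mem (List.mem_map_of_mem ha)

variable {q sg} in
lemma length_body_le_maxLen {τ : TGD} (hτ : τ ∈ sg) : τ.1.length ≤ maxLen q sg :=
  (List.le_sum_of_mem (List.mem_map_of_mem (f := fun τ : TGD => τ.1.length) hτ)).trans
    (Nat.le_add_left _ _)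

variable {S q sg} in
lemma mem_poolAtoms {a : Atom Var} (hS : a.1 ∈ S) (ha : a ∈ queryAtoms q sg) :
    a ∈ poolAtoms S q sg :=
  ⟨hS, length_le_maxArity ha, fun _ hx => mem_poolVars_of_mem_queryAtoms ha hx⟩

lemma query_mem_poolQueries (hq : bcqOver S q) : q ∈ poolQueries S q sg :=
  ⟨Nat.le_add_right _ _, fun a ha => mem_poolAtoms (hq a ha) (mem_queryAtoms_of_mem_query ha)⟩

def goalSym : ℕ := S.sup id + 1

def judgmentSym (p : BCQ × Var) : ℕ := goalSym S + 1 + Encodable.encode p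

lemma not_mem_of_goalSym_le {n : ℕ} (hn : goalSym S ≤ n) : n ∉ S :=
  fun h => (Finset.le_sup (f := id) h).not_gt (Nat.lt_of_lt_of_le (Nat.lt_succ_self _) hn)

lemma goalSym_not_mem : goalSym S ∉ S := not_mem_of_goalSym_le S le_rfl

lemma judgmentSym_not_mem (p : BCQ × Var) : judgmentSym S p ∉ S :=
  not_mem_of_goalSym_le S (by unfold judgmentSym; omega)

lemma judgmentSym_ne_goalSym (p : BCQ × Var) : judgmentSym S p ≠ goalSym S := by
  unfold judgmentSym; omega

lemma judgmentSym_injective : Function.Injective (judgmentSym S) := fun p p' h =>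
  Encodable.encode_injective (by unfold judgmentSym at h; omega)

def certainAt {D : Type} (I : Inst D) (r : BCQ) (v : Var) (d : D) : Prop :=
  ∀ (E : Type) (e : D → E), Function.Injective e →
    ∀ J : Inst E, overSchema S J → mapInst e I ⊆ J → sigmaHolds sg J →
      pinnedHolds J r v (e d)

def certainInterp {D : Type} (I : Inst D) : Inst D :=
  I ∪ {α | ∃ p d, α = (judgmentSym S p, [d]) ∧ certainAt S sg I p.1 p.2 d} ∪
    {α | α = (goalSym S, []) ∧ certain S sg (fun _ J => bcqHolds q J) I}

variable {S q sg} in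
lemma certainAt_of_mem_certainInterp {D : Type} {I : Inst D} (hI : overSchema S I)
    {p : BCQ × Var} {d : D} (h : (judgmentSym S p, [d]) ∈ certainInterp S q sg I) :
    certainAt S sg I p.1 p.2 d := by
  rcases h with (h | ⟨p', d', he, hc⟩) | ⟨he, -⟩
  · exact absurd (hI _ h) (judgmentSym_not_mem S p)
  · simp only [Prod.mk.injEq, List.cons.injEq, and_true] at he
    rwa [judgmentSym_injective S he.1, he.2]
  · simp at he

variable {S q sg} in
lemma certain_of_mem_certainInterp {D : Type} {I : Inst D} (hI : overSchema S I)
    (h : (goalSym S, ([] : List D)) ∈ certainInterp S q sg I) :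
    certain S sg (fun _ J => bcqHolds q J) I := by
  rcases h with (h | ⟨p, d, he, -⟩) | ⟨-, h⟩
  · exact absurd (hI _ h) (goalSym_not_mem S)
  · simp at he
  · exact h

variable {S q sg} in
lemma mem_of_mem_certainInterp {D : Type} {I : Inst D} {α : Atom D}
    (h : α ∈ certainInterp S q sg I) (hS : α.1 ∈ S) : α ∈ I := by
  rcases h with (h | ⟨p, d, rfl, -⟩) | ⟨rfl, -⟩
  · exact h
  · exact absurd hS (judgmentSym_not_mem S p)
  · exact absurd hS (goalSym_not_mem S)

def isSoundRule (ru : DatalogRule) : Prop :=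
  ∀ (D : Type) (I : Inst D), overSchema S I → ruleHolds ru (certainInterp S q sg I)

def judgmentAtoms : Set (Atom Var) :=
  {a | ∃ p ∈ judgments S q sg, ∃ u ∈ ruleVars q sg, a = (judgmentSym S p, [u])}

/-- Bounds the bodies of the context rules (one atom per judgment) and of the split rules. -/
def maxBodyLen : ℕ := (judgments S q sg).ncard + 2 * maxLen q sg + 1

def candidateRules : Set DatalogRule :=
  {ru | ru.1 ∈ insert (goalSym S, []) (judgmentAtoms S q sg) ∧
    ru.2.length ≤ maxBodyLen S q sg ∧
    ∀ a ∈ ru.2, a ∈ poolAtoms S q sg ∪ judgmentAtoms S q sg}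

lemma candidateRules_finite : (candidateRules S q sg).Finite := by
  have hJ : (judgmentAtoms S q sg).Finite :=
    (((judgments_finite S q sg).prod (ruleVars q sg).finite_toSet).image
      fun pu => ((judgmentSym S pu.1, [pu.2]) : Atom Var)).subset
      fun _ ⟨p, hp, u, hu, he⟩ => ⟨(p, u), ⟨hp, hu⟩, he.symm⟩
  exact ((hJ.insert _).prod (finite_setOf_length_le_of_forall_mem
    ((poolAtoms_finite S q sg).union hJ) _)).subset fun ru h => ⟨h.1, h.2⟩

def rewritingProgram : DatalogProgram :=
  ((candidateRules_finite S q sg).subset (Set.sep_subset _ (isSoundRule S q sg))).toFinset.toList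

def rewriting : DatalogQuery := (rewritingProgram S q sg, goalSym S)

variable {S q sg} in
lemma mem_rewritingProgram {ru : DatalogRule} :
    ru ∈ rewritingProgram S q sg ↔ ru ∈ candidateRules S q sg ∧ isSoundRule S q sg ru := by
  simp [rewritingProgram]

lemma dlFix_subset_certainInterp {D : Type} {I : Inst D} (hI : overSchema S I) :
    dlFix (rewritingProgram S q sg) I ⊆ certainInterp S q sg I :=
  Set.sInter_subset_of_mem
    ⟨fun _ h => Or.inl (Or.inl h), fun _ hr => (mem_rewritingProgram.mp hr).2 D I hI⟩

lemma certain_of_dlHolds_rewriting {D : Type} {I : Inst D} (hI : overSchema S I)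
    (h : dlHolds (rewriting S q sg) I) : certain S sg (fun _ J => bcqHolds q J) I :=
  certain_of_mem_certainInterp hI (dlFix_subset_certainInterp S q sg hI h)

/-- Elements of the tree-shaped chase: the root (an element of the instance, or `none` for bags
attached to no element) and the address below it. -/
abbrev ChaseDom (D : Type) : Type := Option D × List (ℕ × Var)

def root {D : Type} (ro : Option D) : ChaseDom D := (ro, [])

def child {D : Type} (c : ChaseDom D) (s : ℕ × Var) : ChaseDom D := (c.1, c.2 ++ [s])

lemma root_some_injective {D : Type} : Function.Injective (fun d : D => root (some d)) :=
  fun _ _ h => Option.some_injective _ (congrArg Prod.fst h)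

lemma child_ne_root {D : Type} (c : ChaseDom D) (s : ℕ × Var) (ro : Option D) :
    child c s ≠ root ro := by
  simp [child, root]

def tgdAt (i : ℕ) : TGD := sg.getD i ([], [])

variable {sg} in
lemma tgdAt_mem {i : ℕ} (hi : i < sg.length) : tgdAt sg i ∈ sg := by
  rw [tgdAt, List.getD_eq_getElem sg ([], []) hi]
  exact List.getElem_mem _

/-- Body variables go to the attachment point `c` (only the frontier variable matters), the
existential variables to fresh children of `c`. -/
def bagMap {D : Type} (c : ChaseDom D) (i : ℕ) (y : Var) : ChaseDom D :=
  if y ∈ varsIn (tgdAt sg i).1 then c else child c (i, y)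

def bag {D : Type} (c : ChaseDom D) (i : ℕ) : Inst (ChaseDom D) :=
  {α | ∃ b ∈ (tgdAt sg i).2, α = mapAtom (bagMap sg c i) b}

variable {sg} in
lemma mem_bag_elem_cases {D : Type} {c : ChaseDom D} {i : ℕ} {α : Atom (ChaseDom D)}
    (hα : α ∈ bag sg c i) {x : ChaseDom D} (hx : x ∈ α.2) :
    (∃ y ∈ frontier (tgdAt sg i), x = c) ∨ ∃ y, x = child c (i, y) := by
  obtain ⟨b, hb, rfl⟩ := hα
  obtain ⟨y, hy, rfl⟩ := List.mem_map.mp hx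
  unfold bagMap
  split_ifs with hyv
  exacts [Or.inl ⟨y, ⟨hyv, b, hb, hy⟩, rfl⟩, Or.inr ⟨y, rfl⟩]

variable {sg} in
lemma fst_eq_of_mem_bag {D : Type} {c : ChaseDom D} {i : ℕ} {α : Atom (ChaseDom D)}
    (hα : α ∈ bag sg c i) {x : ChaseDom D} (hx : x ∈ α.2) : x.1 = c.1 := by
  rcases mem_bag_elem_cases hα hx with ⟨_, _, rfl⟩ | ⟨_, rfl⟩ <;> rfl

def triggers {D : Type} (J : Inst (ChaseDom D)) (i : ℕ) (c : ChaseDom D) : Prop :=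
  i < sg.length ∧ ∃ h : Var → ChaseDom D,
    (∀ a ∈ (tgdAt sg i).1, mapAtom h a ∈ J) ∧ ∀ y ∈ frontier (tgdAt sg i), h y = c

def chaseStage {D : Type} (I : Inst D) : ℕ → Inst (ChaseDom D)
  | 0 => mapInst (fun d => root (some d)) I
  | k + 1 =>
    chaseStage I k ∪ {α | ∃ i c, triggers sg (chaseStage I k) i c ∧ α ∈ bag sg c i}

def fires {D : Type} (I : Inst D) (i : ℕ) (c : ChaseDom D) (k : ℕ) : Prop :=
  triggers sg (chaseStage sg I k) i c

def firedBefore {D : Type} (I : Inst D) (k i : ℕ) (c : ChaseDom D) : Prop :=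
  ∃ k' < k, fires sg I i c k'

variable {sg} in
lemma firedBefore.mono {D : Type} {I : Inst D} {k k' i : ℕ} {c : ChaseDom D}
    (h : firedBefore sg I k i c) (hk : k ≤ k') : firedBefore sg I k' i c :=
  let ⟨k₀, hk₀, hf⟩ := h; ⟨k₀, by omega, hf⟩

lemma chaseStage_mono {D : Type} (I : Inst D) : Monotone (chaseStage sg I) :=
  monotone_nat_of_le_succ fun _ => Set.subset_union_left

def chase {D : Type} (I : Inst D) : Inst (ChaseDom D) := ⋃ k, chaseStage sg I k

variable {sg} in
lemma exists_chaseStage_of_forall_mem_chase {D : Type} {I : Inst D} (r : List (Atom Var))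
    (f : Var → ChaseDom D) (h : ∀ a ∈ r, mapAtom f a ∈ chase sg I) :
    ∃ k, ∀ a ∈ r, mapAtom f a ∈ chaseStage sg I k := by
  induction r with
  | nil => exact ⟨0, by simp⟩
  | cons a t ih =>
    obtain ⟨k₁, hk₁⟩ := ih fun b hb => h b (List.mem_cons_of_mem _ hb)
    obtain ⟨k₂, hk₂⟩ := Set.mem_iUnion.mp (h a List.mem_cons_self)
    refine ⟨max k₁ k₂, fun b hb => ?_⟩
    rcases List.mem_cons.mp hb with rfl | hb
    · exact chaseStage_mono sg I (le_max_right _ _) hk₂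
    · exact chaseStage_mono sg I (le_max_left _ _) (hk₁ b hb)

variable {S sg} in
lemma chase_overSchema (hS : ∀ τ ∈ sg, ∀ a ∈ τ.2, a.1 ∈ S) {D : Type} {I : Inst D}
    (hI : overSchema S I) : overSchema S (chase sg I) := by
  intro α hα
  obtain ⟨k, hk⟩ := Set.mem_iUnion.mp hα
  induction k generalizing α with
  | zero =>
    obtain ⟨β, hβ, rfl⟩ := hk
    exact hI β hβ
  | succ n ih =>
    rcases hk with hk | ⟨i, c, hf, b, hb, rfl⟩
    · exact ih α (Set.mem_iUnion_of_mem _ hk) hk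
    · exact hS _ (tgdAt_mem hf.1) b hb

lemma exists_eq_on_frontier {τ : TGD} (hτ : frontierOne τ) {E : Type} [Nonempty E]
    (h : Var → E) : ∃ c, ∀ y ∈ frontier τ, h y = c := by
  by_cases hne : (frontier τ).Nonempty
  · exact ⟨h hne.some, fun y hy => congrArg h (hτ hy hne.some_mem)⟩
  · exact ⟨Classical.arbitrary E, fun y hy => absurd ⟨y, hy⟩ hne⟩

variable {sg} in
lemma sigmaHolds_chase (hfr : ∀ τ ∈ sg, frontierOne τ) {D : Type} (I : Inst D) :
    sigmaHolds sg (chase sg I) := by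
  intro τ hτ h hbody
  obtain ⟨i, hi, rfl⟩ := List.mem_iff_getElem.mp hτ
  have hτi : tgdAt sg i = sg[i] := by rw [tgdAt, List.getD_eq_getElem sg ([], []) hi]
  obtain ⟨k, hk⟩ := exists_chaseStage_of_forall_mem_chase _ h hbody
  obtain ⟨c, hc⟩ := exists_eq_on_frontier (hfr _ hτ) h
  have hfire : fires sg I i c k := ⟨hi, h, hτi ▸ hk, hτi ▸ hc⟩
  refine ⟨fun y => if y ∈ varsIn sg[i].1 then h y else bagMap sg c i y, fun x hx => if_pos hx,
    fun b hb => Set.mem_iUnion.mpr ⟨k + 1, Or.inr ⟨i, c, hfire, b, hτi ▸ hb, ?_⟩⟩⟩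
  refine mapAtom_congr fun y hy => ?_
  by_cases hyb : y ∈ varsIn sg[i].1
  · rw [if_pos hyb, hc y ⟨hyb, b, hb, hy⟩, bagMap, hτi, if_pos hyb]
  · exact if_neg hyb

variable {sg} in
lemma mem_chaseStage_cases {D : Type} {I : Inst D} {k : ℕ} {α : Atom (ChaseDom D)}
    (hα : α ∈ chaseStage sg I k) :
    α ∈ chaseStage sg I 0 ∨ ∃ i c, firedBefore sg I k i c ∧ α ∈ bag sg c i := by
  induction k with
  | zero => exact Or.inl hα
  | succ n ih =>
    rcases hα with hα | ⟨i, c, hf, hb⟩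
    · exact (ih hα).imp_right fun ⟨i, c, hfb, hb⟩ => ⟨i, c, firedBefore.mono hfb n.le_succ, hb⟩
    · exact Or.inr ⟨i, c, ⟨n, by omega, hf⟩, hb⟩

variable {sg} in
lemma exists_mem_chaseStage_of_mem_frontier {D : Type} {I : Inst D} {i k : ℕ} {c : ChaseDom D}
    (hf : fires sg I i c k) {y : Var} (hy : y ∈ frontier (tgdAt sg i)) :
    ∃ α ∈ chaseStage sg I k, c ∈ α.2 := by
  obtain ⟨-, g, hg, hfr⟩ := hf
  obtain ⟨a, ha, hya⟩ := hy.1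
  exact ⟨_, hg a ha, hfr y hy ▸ List.mem_map_of_mem hya⟩

lemma mem_chaseStage_elem_cases {D : Type} (I : Inst D) (k : ℕ) :
    ∀ α ∈ chaseStage sg I k, ∀ x ∈ α.2, (∃ d, x = root (some d)) ∨
      ∃ c i y, x = child c (i, y) ∧ firedBefore sg I k i c := by
  induction k using Nat.strong_induction_on with
  | _ k IH =>
  intro α hα x hx
  rcases mem_chaseStage_cases hα with ⟨β, -, rfl⟩ | ⟨i, c, hfb, hb⟩
  · obtain ⟨d, -, rfl⟩ := List.mem_map.mp hx
    exact Or.inl ⟨d, rfl⟩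
  rcases mem_bag_elem_cases hb hx with ⟨y, hy, rfl⟩ | ⟨y, rfl⟩
  · obtain ⟨k', hk', hfk⟩ := hfb
    obtain ⟨α', hα', hcα'⟩ := exists_mem_chaseStage_of_mem_frontier hfk hy
    exact (IH k' hk' α' hα' _ hcα').imp_right fun ⟨c', i', y', hx, hfb'⟩ =>
      ⟨c', i', y', hx, firedBefore.mono hfb' hk'.le⟩
  · exact Or.inr ⟨c, i, y, rfl, hfb⟩

variable {sg} in
lemma ne_root_none_of_mem_chaseStage {D : Type} {I : Inst D} {k : ℕ} {α : Atom (ChaseDom D)}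
    (hα : α ∈ chaseStage sg I k) {x : ChaseDom D} (hx : x ∈ α.2) : x ≠ root none := by
  rcases mem_chaseStage_elem_cases sg I k α hα x hx with ⟨d, rfl⟩ | ⟨c, i, y, rfl, -⟩
  · simp [root]
  · exact child_ne_root _ _ _

def nullsBelow {D : Type} (ro : Option D) : Set (ChaseDom D) := {x | x.1 = ro ∧ x.2 ≠ []}

variable {sg} in
lemma exists_bag_of_mem_nullsBelow {D : Type} {I : Inst D} {k : ℕ} {α : Atom (ChaseDom D)}
    (hα : α ∈ chaseStage sg I k) {x : ChaseDom D} (hx : x ∈ α.2) {ro : Option D}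
    (hxro : x ∈ nullsBelow ro) :
    ∃ i c, c.1 = ro ∧ firedBefore sg I k i c ∧ α ∈ bag sg c i := by
  rcases mem_chaseStage_cases hα with ⟨β, -, rfl⟩ | ⟨i, c, hk, hb⟩
  · obtain ⟨d, -, rfl⟩ := List.mem_map.mp hx
    exact absurd rfl hxro.2
  · exact ⟨i, c, (fst_eq_of_mem_bag hb hx).symm.trans hxro.1, hk, hb⟩

def treeMatch {D : Type} (I : Inst D) (k : ℕ) (ro : Option D) (r : BCQ) (v : Var) : Prop :=
  ∃ h : Var → ChaseDom D, h v = root ro ∧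
    ∀ a ∈ r, ∃ i c, c.1 = ro ∧ firedBefore sg I k i c ∧ mapAtom h a ∈ bag sg c i

def isTreeHom {D E : Type} (I : Inst D) (J : Inst E) (ε : E) (ro : Option D) (j : ℕ)
    (f : ChaseDom D → E) : Prop :=
  f (root ro) = ε ∧
    ∀ i c, c.1 = ro → firedBefore sg I j i c → ∀ α ∈ bag sg c i, mapAtom f α ∈ J

def collapseTo {X : Type} (g : Var → X) (x : X) (z : Var) : Var :=
  if g z = x then pinVar q sg else z

variable {q sg} in
lemma pinnedHolds_collapseTo {X : Type} {J : Inst X} {g : Var → X} {x : X} {r : BCQ}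
    (hr : ∀ a ∈ r, a ∈ queryAtoms q sg) (hg : ∀ a ∈ r, mapAtom g a ∈ J) :
    pinnedHolds J (r.map (mapAtom (collapseTo q sg g x))) (pinVar q sg) x := by
  refine ⟨Function.update g (pinVar q sg) x, ?_, by simp⟩
  simp only [List.mem_map]
  rintro _ ⟨a, ha, rfl⟩
  rw [mapAtom_comp, mapAtom_congr (g := g) fun z hz => ?_]
  · exact hg a ha
  have hz' : z ≠ pinVar q sg := by
    rintro rfl; exact pinVar_not_mem_queryAtoms (hr a ha) hz
  simp only [Function.comp, collapseTo]
  split_ifs with hgz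
  · simp [hgz]
  · simp [hz']

variable {S q sg} in
lemma collapseTo_mem_judgments {X : Type} {g : Var → X} {x : X} {τ : TGD} (hτ : τ ∈ sg)
    (hS : ∀ a ∈ τ.1, a.1 ∈ S) {r : BCQ} (hr : r.Sublist τ.1) :
    (r.map (mapAtom (collapseTo q sg g x)), pinVar q sg) ∈ judgments S q sg := by
  refine ⟨⟨by simpa using hr.length_le.trans (length_body_le_maxLen hτ), ?_⟩,
    mem_ruleVars_of_mem_poolVars (Finset.mem_insert_self _ _)⟩
  simp only [List.mem_map]
  rintro _ ⟨a, ha, rfl⟩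
  have haτ := hr.subset ha
  have haQ := mem_queryAtoms_of_mem_body (q := q) hτ haτ
  refine ⟨hS a haτ, by simpa [mapAtom] using length_le_maxArity haQ, ?_⟩
  simp only [mapAtom, List.mem_map]
  rintro _ ⟨z, hz, rfl⟩
  unfold collapseTo
  split_ifs
  exacts [Finset.mem_insert_self _ _, mem_poolVars_of_mem_queryAtoms haQ hz]

def extendChildren {D E : Type} (new : ℕ → ChaseDom D → Prop)
    (w : ℕ → ChaseDom D → Var → E) (f : ChaseDom D → E) (x : ChaseDom D) : E :=
  match x.2.getLast? with
  | some s => if new s.1 (x.1, x.2.dropLast) then w s.1 (x.1, x.2.dropLast) s.2 else f x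
  | none => f x

lemma extendChildren_child {D E : Type} (new : ℕ → ChaseDom D → Prop)
    (w : ℕ → ChaseDom D → Var → E) (f : ChaseDom D → E) (c : ChaseDom D)
    (s : ℕ × Var) :
    extendChildren new w f (child c s) = if new s.1 c then w s.1 c s.2 else f (child c s) := by
  simp [extendChildren, child]

variable {sg} in
lemma extendChildren_of_mem_chaseStage {D E : Type} {I : Inst D} {j : ℕ}
    {new : ℕ → ChaseDom D → Prop} (hnew : ∀ i c, new i c → ¬ firedBefore sg I j i c)
    (w : ℕ → ChaseDom D → Var → E) (f : ChaseDom D → E) {α : Atom (ChaseDom D)}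
    (hα : α ∈ chaseStage sg I j) {x : ChaseDom D} (hx : x ∈ α.2) :
    extendChildren new w f x = f x := by
  rcases mem_chaseStage_elem_cases sg I j α hα x hx with ⟨d, rfl⟩ | ⟨c, i, y, rfl, hfb⟩
  · rfl
  · rw [extendChildren_child, if_neg fun h => hnew i c h hfb]

section TreeHom

variable {S q sg} {D E : Type} {I : Inst D} {J : Inst E} {ε : E} {ro : Option D} {n : ℕ}
  (hS : ∀ τ ∈ sg, ∀ a ∈ τ.1, a.1 ∈ S)
  (hctx : ∀ p ∈ judgments S q sg,
    pinnedHolds (chaseStage sg I n) p.1 p.2 (root ro) → pinnedHolds J p.1 p.2 ε)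
include hS hctx

/-- A bag of the tree below `ro` triggered at stage `j ≤ n` has its body matched in `J`: the
atoms of the body lying in the tree are mapped by `f`, the others meet the tree only at the root,
so they form a judgment at the root that holds by stage `n`. -/
lemma exists_body_match_of_isTreeHom {j : ℕ} (hj : j ≤ n) {f : ChaseDom D → E}
    (hf : isTreeHom sg I J ε ro j f) {i : ℕ} {c : ChaseDom D} (hro : c.1 = ro) (hfire : fires sg I i c j) :
    ∃ g' : Var → E, (∀ a ∈ (tgdAt sg i).1, mapAtom g' a ∈ J) ∧
      ∀ y ∈ frontier (tgdAt sg i), g' y = f c := by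
  obtain ⟨hi, g, hg, hfr⟩ := hfire
  have hτ := tgdAt_mem hi
  set inTree : Atom Var → Prop := fun a =>
    ∃ i' c', c'.1 = ro ∧ firedBefore sg I j i' c' ∧ mapAtom g a ∈ bag sg c' i'
  set out := (tgdAt sg i).1.filter (fun a => ¬ inTree a)
  have hout : ∀ a ∈ out, a ∈ (tgdAt sg i).1 ∧ ¬ inTree a := by simp [out]
  have hout_root : ∀ a ∈ out, ∀ z ∈ a.2, (g z).1 = ro → g z = root ro := by
    intro a ha z hz hzro
    by_contra hne
    exact (hout a ha).2 (exists_bag_of_mem_nullsBelow (hg a (hout a ha).1)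
      (List.mem_map_of_mem hz) ⟨hzro, fun hnil => hne (Prod.ext hzro hnil)⟩)
  obtain ⟨m, hm, hmpin⟩ := hctx _ (collapseTo_mem_judgments (x := root ro) hτ (hS _ hτ)
    List.filter_sublist) (pinnedHolds_collapseTo
      (fun a ha => mem_queryAtoms_of_mem_body hτ (hout a ha).1)
      fun a ha => chaseStage_mono sg I hj (hg a (hout a ha).1))
  let g' : Var → E := fun z => if (g z).1 = ro then f (g z) else m z
  refine ⟨g', fun a ha => ?_, fun y hy => by simp only [g', hfr y hy, if_pos hro]⟩
  by_cases hin : inTree a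
  · obtain ⟨i', c', hc', hk', hbag⟩ := hin
    have hroot : ∀ z ∈ a.2, (g z).1 = ro := fun z hz =>
      (fst_eq_of_mem_bag hbag (List.mem_map_of_mem hz)).trans hc'
    have : mapAtom g' a = mapAtom f (mapAtom g a) := by
      rw [mapAtom_comp]; exact mapAtom_congr fun z hz => if_pos (hroot z hz)
    exact this ▸ hf.2 i' c' hc' hk' _ hbag
  · have ha' : a ∈ out := by simp [out, ha, hin]
    have : mapAtom g' a = mapAtom m (mapAtom (collapseTo q sg g (root ro)) a) := by
      rw [mapAtom_comp]
      refine mapAtom_congr fun z hz => ?_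
      simp only [g', Function.comp, collapseTo]
      by_cases hzro : (g z).1 = ro
      · rw [if_pos hzro, if_pos (hout_root a ha' z hz hzro), hout_root a ha' z hz hzro, hmpin,
          hf.1]
      · rw [if_neg hzro, if_neg fun he => hzro (by rw [he]; rfl)]
    exact this ▸ hm _ (List.mem_map_of_mem ha')

lemma exists_head_witness_of_isTreeHom (hsJ : sigmaHolds sg J)
    {j : ℕ} (hj : j ≤ n) {f : ChaseDom D → E} (hf : isTreeHom sg I J ε ro j f) {i : ℕ}
    {c : ChaseDom D} (hro : c.1 = ro) (hfire : fires sg I i c j) :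
    ∃ w : Var → E, ∀ b ∈ (tgdAt sg i).2,
      mapAtom (fun y => if y ∈ varsIn (tgdAt sg i).1 then f c else w y) b ∈ J := by
  obtain ⟨g', hg', hfr⟩ :=
    exists_body_match_of_isTreeHom hS hctx hj hf hro hfire
  obtain ⟨w, hw, hhead⟩ := hsJ _ (tgdAt_mem hfire.1) g' hg'
  refine ⟨w, fun b hb => mapAtom_congr (g := w) (fun y hy => ?_) ▸ hhead b hb⟩
  split_ifs with hyv
  · rw [hw y hyv, hfr y ⟨hyv, b, hb, hy⟩]
  · rfl

lemma isTreeHom.exists_succ (hsJ : sigmaHolds sg J)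
    {j : ℕ} (hj : j ≤ n) {f : ChaseDom D → E} (hf : isTreeHom sg I J ε ro j f) :
    ∃ f', isTreeHom sg I J ε ro (j + 1) f' := by
  have hw : ∀ i c, ∃ w : Var → E, c.1 = ro → fires sg I i c j → ∀ b ∈ (tgdAt sg i).2,
      mapAtom (fun y => if y ∈ varsIn (tgdAt sg i).1 then f c else w y) b ∈ J := by
    intro i c
    by_cases h : c.1 = ro ∧ fires sg I i c j
    · obtain ⟨w, hw⟩ := exists_head_witness_of_isTreeHom hS hctx hsJ hj hf h.1 h.2
      exact ⟨w, fun _ _ => hw⟩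
    · exact ⟨fun _ => ε, fun h₁ h₂ => absurd ⟨h₁, h₂⟩ h⟩
  choose w hw using hw
  let new : ℕ → ChaseDom D → Prop := fun i c =>
    c.1 = ro ∧ fires sg I i c j ∧ ¬ firedBefore sg I j i c
  have hnew : ∀ i c, new i c → ¬ firedBefore sg I j i c := fun _ _ h => h.2.2
  have hatt : ∀ i c k, k ≤ j → fires sg I i c k → ∀ y ∈ frontier (tgdAt sg i),
      extendChildren new w f c = f c := fun i c k hk hfk y hy =>
    let ⟨_, hα, hcα⟩ := exists_mem_chaseStage_of_mem_frontier hfk hy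
    extendChildren_of_mem_chaseStage hnew w f (chaseStage_mono sg I hk hα) hcα
  refine ⟨extendChildren new w f, hf.1, ?_⟩
  rintro i c hro ⟨k', hk', hfk⟩ _ ⟨b, hb, rfl⟩
  rw [mapAtom_comp]
  by_cases hold : firedBefore sg I j i c
  · have heq : mapAtom (extendChildren new w f ∘ bagMap sg c i) b =
        mapAtom f (mapAtom (bagMap sg c i) b) := by
      rw [mapAtom_comp]
      refine mapAtom_congr fun y hy => ?_
      simp only [Function.comp, bagMap]
      split_ifs with hyv
      · obtain ⟨k'', hk'', hfk''⟩ := hold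
        exact hatt i c k'' hk''.le hfk'' y ⟨hyv, b, hb, hy⟩
      · rw [extendChildren_child, if_neg fun h => h.2.2 hold]
    exact heq ▸ hf.2 i c hro hold _ ⟨b, hb, rfl⟩
  · obtain rfl : k' = j := by
      by_contra hne
      exact hold ⟨k', by omega, hfk⟩
    have heq : mapAtom (extendChildren new w f ∘ bagMap sg c i) b =
        mapAtom (fun y => if y ∈ varsIn (tgdAt sg i).1 then f c else w i c y) b := by
      refine mapAtom_congr fun y hy => ?_
      simp only [Function.comp, bagMap]
      split_ifs with hyv
      · exact hatt i c k' le_rfl hfk y ⟨hyv, b, hb, hy⟩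
      · rw [extendChildren_child, if_pos ⟨hro, hfk, hold⟩]
    exact heq ▸ hw i c hro hfk b hb

lemma exists_isTreeHom (hsJ : sigmaHolds sg J) : ∀ j ≤ n + 1, ∃ f, isTreeHom sg I J ε ro j f
  | 0, _ => ⟨fun _ => ε, rfl, fun _ _ _ ⟨_, hk, _⟩ => absurd hk (Nat.not_lt_zero _)⟩
  | j + 1, hj =>
    let ⟨_, hf⟩ := exists_isTreeHom hsJ j (by omega)
    hf.exists_succ hS hctx hsJ (by omega)

lemma pinnedHolds_of_treeMatch (hsJ : sigmaHolds sg J)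
    {r : BCQ} {v : Var} (hr : treeMatch sg I (n + 1) ro r v) : pinnedHolds J r v ε := by
  obtain ⟨f, hf⟩ := exists_isTreeHom hS hctx hsJ (n + 1) le_rfl
  obtain ⟨h, hv, hatoms⟩ := hr
  refine ⟨f ∘ h, fun a ha => ?_, by simp [hv, hf.1]⟩
  obtain ⟨i, c, hro, hfb, hbag⟩ := hatoms a ha
  exact mapAtom_comp h f a ▸ hf.2 i c hro hfb _ hbag

end TreeHom

variable {S q sg} in
lemma judgment_mem_certainInterp {D : Type} {I : Inst D} {p : BCQ × Var} {d : D}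
    (h : certainAt S sg I p.1 p.2 d) : (judgmentSym S p, [d]) ∈ certainInterp S q sg I :=
  Or.inl (Or.inr ⟨p, d, rfl, h⟩)

variable {S q sg} in
lemma judgmentAtom_mem {p : BCQ × Var} (hp : p ∈ judgments S q sg) {u : Var}
    (hu : u ∈ ruleVars q sg) : (judgmentSym S p, [u]) ∈ judgmentAtoms S q sg :=
  ⟨p, hp, u, hu, rfl⟩

lemma maxLen_le_maxBodyLen : 2 * maxLen q sg ≤ maxBodyLen S q sg := by
  unfold maxBodyLen; omega

/-- Makes every judgment predicate intensional. -/
def selfRule (p : BCQ × Var) : DatalogRule :=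
  ((judgmentSym S p, [globalVar q sg]), [(judgmentSym S p, [globalVar q sg])])

variable {S q sg} in
lemma selfRule_mem {p : BCQ × Var} (hp : p ∈ judgments S q sg) :
    selfRule S q sg p ∈ rewritingProgram S q sg := by
  have hatom := judgmentAtom_mem hp (globalVar_mem_ruleVars q sg)
  refine mem_rewritingProgram.mpr ⟨⟨Or.inr hatom, ?_, ?_⟩,
    fun D I _ ν hbody => hbody _ (by simp [selfRule])⟩
  · simp only [selfRule, List.length_singleton, maxBodyLen]; omega
  · simp [selfRule, hatom]

/-- A judgment whose pin does not occur in its query holds everywhere once it holds somewhere. -/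
def repinRule (p : BCQ × Var) : DatalogRule :=
  ((judgmentSym S p, [globalVar q sg]), [(judgmentSym S p, [pinVar q sg])])

variable {S q sg} in
lemma repinRule_mem {p : BCQ × Var} (hp : p ∈ judgments S q sg) (hpin : p.2 ∉ varsIn p.1) :
    repinRule S q sg p ∈ rewritingProgram S q sg := by
  refine mem_rewritingProgram.mpr ⟨⟨Or.inr (judgmentAtom_mem hp
    (globalVar_mem_ruleVars q sg)), ?_, ?_⟩, ?_⟩
  · simp only [repinRule, List.length_singleton, maxBodyLen]; omega
  · simp [repinRule, judgmentAtom_mem hp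
      (mem_ruleVars_of_mem_poolVars (Finset.mem_insert_self _ _))]
  intro D I hI ν hbody
  refine judgment_mem_certainInterp fun E e he J hJS hIJ hsJ => ?_
  exact (certainAt_of_mem_certainInterp hI (hbody _ (List.mem_singleton_self _))
    E e he J hJS hIJ hsJ).repin hpin _

def goalRule : DatalogRule :=
  ((goalSym S, []), [(judgmentSym S (q, globalVar q sg), [globalVar q sg])])

lemma query_mem_judgments (hq : bcqOver S q) : (q, globalVar q sg) ∈ judgments S q sg :=
  ⟨query_mem_poolQueries S q sg hq, globalVar_mem_ruleVars q sg⟩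

lemma goalRule_mem (hq : bcqOver S q) : goalRule S q sg ∈ rewritingProgram S q sg := by
  have hatom := judgmentAtom_mem (query_mem_judgments S q sg hq) (globalVar_mem_ruleVars q sg)
  refine mem_rewritingProgram.mpr ⟨⟨Set.mem_insert _ _, ?_, by simp [goalRule, hatom]⟩, ?_⟩
  · simp only [goalRule, List.length_singleton, maxBodyLen]; omega
  intro D I hI ν hbody
  have hcert := certainAt_of_mem_certainInterp hI (hbody _ (List.mem_singleton_self _))
  refine Or.inr ⟨rfl, fun E e he J hJS hIJ hsJ => ?_⟩
  obtain ⟨m, hm, -⟩ := hcert E e he J hJS hIJ hsJ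
  exact ⟨m, hm⟩

/-- The judgment `(t, u)` at the root of a tree follows from the judgments `Γ` that held there
one stage earlier. -/
def contextRule (t : BCQ) (u : Var) (Γ : Finset (BCQ × Var)) : DatalogRule :=
  ((judgmentSym S (t, u), [globalVar q sg]),
    Γ.toList.map fun γ => (judgmentSym S γ, [globalVar q sg]))

variable {S q sg} in
lemma contextRule_mem (hS : ∀ τ ∈ sg, ∀ a ∈ τ.1, a.1 ∈ S) {t : BCQ} {u : Var}
    (htu : (t, u) ∈ judgments S q sg) {Γ : Finset (BCQ × Var)}
    (hΓ : ∀ γ ∈ Γ, γ ∈ judgments S q sg) {D : Type} {I : Inst D} {n : ℕ} {ro : Option D}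
    (hctx : ∀ p ∈ judgments S q sg,
      pinnedHolds (chaseStage sg I n) p.1 p.2 (root ro) → p ∈ Γ)
    (ht : treeMatch sg I (n + 1) ro t u) :
    contextRule S q sg t u Γ ∈ rewritingProgram S q sg := by
  refine mem_rewritingProgram.mpr ⟨⟨Or.inr (judgmentAtom_mem htu
    (globalVar_mem_ruleVars q sg)), ?_, ?_⟩, ?_⟩
  · have : Γ.card ≤ (judgments S q sg).ncard := by
      rw [← Set.ncard_coe_finset]
      exact Set.ncard_le_ncard hΓ (judgments_finite S q sg)
    simp only [contextRule, List.length_map, Finset.length_toList, maxBodyLen]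
    omega
  · simp only [contextRule, List.mem_map, Finset.mem_toList]
    rintro _ ⟨γ, hγ, rfl⟩
    exact Or.inr (judgmentAtom_mem (hΓ γ hγ) (globalVar_mem_ruleVars q sg))
  intro D₀ I₀ hI₀ ν hbody
  refine judgment_mem_certainInterp fun E e he J hJS hIJ hsJ => ?_
  refine pinnedHolds_of_treeMatch (q := q) hS (fun p hp hpI => ?_) hsJ ht
  exact certainAt_of_mem_certainInterp hI₀
    (hbody _ (List.mem_map_of_mem (Finset.mem_toList.mpr (hctx p hp hpI)))) E e he J hJS hIJ hsJ

def splitRule (s : BCQ) (w : Var) (σ : Var → Var) (r₀ : BCQ) (gl : List (BCQ × Var)) :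
    DatalogRule :=
  ((judgmentSym S (s, w), [σ w]),
    r₀.map (mapAtom σ) ++ gl.map fun g => (judgmentSym S (g.1.map (mapAtom σ), g.2), [g.2]))

variable {S q sg} in
/-- `B` marks the variables sent to elements of the instance, the only ones `σ` may rename; any
other variable lies in at most one group. -/
lemma splitRule_sound {s : BCQ} {w : Var} {σ : Var → Var} {r₀ : BCQ} {gl : List (BCQ × Var)}
    (B : Var → Prop) (hs : ∀ a ∈ s, a.1 ∈ S) (hσ : ∀ z ∈ varsIn s, ¬ B z → σ z = z)
    (hw : B w) (hcover : ∀ a ∈ s, a ∈ r₀ ∨ ∃ g ∈ gl, a ∈ g.1)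
    (hr₀ : ∀ a ∈ r₀, a ∈ s ∧ ∀ z ∈ a.2, B z)
    (hpin : ∀ g ∈ gl, ∀ z ∈ varsIn g.1, B z → σ z = g.2)
    (hdisj : ∀ z, ¬ B z → ∀ g ∈ gl, ∀ g' ∈ gl,
      z ∈ varsIn g.1 → z ∈ varsIn g'.1 → g = g') :
    isSoundRule S q sg (splitRule S s w σ r₀ gl) := by
  intro D₀ I₀ hI₀ ν hbody
  refine judgment_mem_certainInterp fun E e he J hJS hIJ hsJ => ?_
  have hgroup : ∀ g, ∃ m : Var → E, g ∈ gl →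
      (∀ a ∈ g.1.map (mapAtom σ), mapAtom m a ∈ J) ∧ m g.2 = e (ν g.2) := by
    intro g
    by_cases hg : g ∈ gl
    · obtain ⟨m, hm⟩ := certainAt_of_mem_certainInterp hI₀ (hbody _
        (List.mem_append_right _ (List.mem_map_of_mem hg))) E e he J hJS hIJ hsJ
      exact ⟨m, fun _ => hm⟩
    · exact ⟨fun _ => e (ν w), fun h => absurd h hg⟩
  choose m hm using hgroup
  let M : Var → E := fun z =>
    if B z then e (ν (σ z))
    else if H : ∃ g ∈ gl, z ∈ varsIn g.1 then m H.choose z else e (ν w)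
  refine ⟨M, fun a ha => ?_, if_pos hw⟩
  rcases hcover a ha with har | ⟨g, hg, hag⟩
  · have hfact : mapAtom ν (mapAtom σ a) ∈ I₀ :=
      mem_of_mem_certainInterp (hbody _ (List.mem_append_left _ (List.mem_map_of_mem har)))
        (hs a ha)
    have heq : mapAtom M a = mapAtom e (mapAtom ν (mapAtom σ a)) := by
      rw [mapAtom_comp, mapAtom_comp]
      exact mapAtom_congr fun z hz => if_pos ((hr₀ a har).2 z hz)
    exact heq ▸ hIJ ⟨_, hfact, rfl⟩
  · have heq : mapAtom M a = mapAtom (m g) (mapAtom σ a) := by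
      rw [mapAtom_comp]
      refine mapAtom_congr fun z hz => ?_
      have hzg : z ∈ varsIn g.1 := ⟨a, hag, hz⟩
      by_cases hB : B z
      · simp only [M, if_pos hB, Function.comp, hpin g hg z hzg hB, (hm g hg).2]
      · have H : ∃ g ∈ gl, z ∈ varsIn g.1 := ⟨g, hg, hzg⟩
        have hHg : H.choose = g := hdisj z hB _ H.choose_spec.1 g hg H.choose_spec.2 hzg
        simp only [M, if_neg hB, dif_pos H, Function.comp, hσ z ⟨a, ha, hz⟩ hB, hHg]
    exact heq ▸ (hm g hg).1 _ (List.mem_map_of_mem hag)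

variable {S q sg} in
lemma splitRule_mem_candidateRules {s : BCQ} {w : Var} {σ : Var → Var} {r₀ : BCQ}
    {gl : List (BCQ × Var)} (hsw : (s, w) ∈ judgments S q sg) (hσw : σ w ∈ ruleVars q sg)
    (hr₀ : ∀ a ∈ r₀, mapAtom σ a ∈ poolAtoms S q sg)
    (hr₀len : r₀.length ≤ maxLen q sg)
    (hgl : ∀ g ∈ gl, (g.1.map (mapAtom σ), g.2) ∈ judgments S q sg)
    (hgllen : gl.length ≤ maxLen q sg) :
    splitRule S s w σ r₀ gl ∈ candidateRules S q sg := by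
  refine ⟨Or.inr (judgmentAtom_mem hsw hσw), ?_, ?_⟩
  · have := maxLen_le_maxBodyLen S q sg
    simp only [splitRule, List.length_append, List.length_map]
    omega
  · simp only [splitRule, List.mem_append, List.mem_map]
    rintro _ (⟨a, ha, rfl⟩ | ⟨g, hg, rfl⟩)
    · exact Or.inl (hr₀ a ha)
    · exact Or.inr (judgmentAtom_mem (hgl g hg) (hgl g hg).2)

section Split

variable {D : Type} (I : Inst D) (k : ℕ) (s : BCQ) (h : Var → ChaseDom D)

def isTreeAtom (a : Atom Var) : Prop := mapAtom h a ∉ chaseStage sg I 0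

/-- The root of a tree containing the image of a tree atom. -/
def rootOf (a : Atom Var) : Option D :=
  if H : ∃ ro i c, c.1 = ro ∧ firedBefore sg I k i c ∧ mapAtom h a ∈ bag sg c i then
    H.choose
  else none

def rep (ro : Option D) : Var :=
  if H : ∃ z ∈ varsIn s, h z = root ro then H.choose else globalVar q sg

/-- Identifies all variables sent to the same element of `I`. -/
def unify (z : Var) : Var := if (h z).2 = [] then rep q sg s h (h z).1 else z

def group (ro : Option D) : BCQ :=
  s.filter fun a => isTreeAtom sg I h a ∧ rootOf sg I k h a = ro

def groups : List (BCQ × Var) :=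
  (s.filter (isTreeAtom sg I h)).map fun a =>
    (group sg I k s h (rootOf sg I k h a), rep q sg s h (rootOf sg I k h a))

def baseAtoms : BCQ := s.filter fun a => ¬ isTreeAtom sg I h a

/-- The assignment under which the split rule of `s` fires, deriving the judgment at `d`. -/
def splitVal (d : D) (z : Var) : D := if z = globalVar q sg then d else (h z).1.getD d

variable {S q sg I k s h} (hmatch : ∀ a ∈ s, mapAtom h a ∈ chaseStage sg I k)
  (hs : ∀ a ∈ s, a ∈ poolAtoms S q sg)

include hmatch in
lemma rootOf_spec {a : Atom Var} (ha : a ∈ s) (hta : isTreeAtom sg I h a) :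
    ∃ i c, c.1 = rootOf sg I k h a ∧ firedBefore sg I k i c ∧ mapAtom h a ∈ bag sg c i := by
  have H : ∃ ro i c, c.1 = ro ∧ firedBefore sg I k i c ∧ mapAtom h a ∈ bag sg c i := by
    rcases mem_chaseStage_cases (hmatch a ha) with h0 | ⟨i, c, hk, hb⟩
    · exact absurd h0 hta
    · exact ⟨c.1, i, c, rfl, hk, hb⟩
  rw [rootOf, dif_pos H]
  exact H.choose_spec

include hmatch in
lemma fst_eq_rootOf {a : Atom Var} (ha : a ∈ s) (hta : isTreeAtom sg I h a) {z : Var}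
    (hz : z ∈ a.2) : (h z).1 = rootOf sg I k h a := by
  obtain ⟨i, c, hc, -, hbag⟩ := rootOf_spec hmatch ha hta
  exact (fst_eq_of_mem_bag hbag (List.mem_map_of_mem hz)).trans hc

lemma exists_eq_root_of_not_isTreeAtom {a : Atom Var} (hta : ¬ isTreeAtom sg I h a)
    {z : Var} (hz : z ∈ a.2) : ∃ d, h z = root (some d) := by
  obtain ⟨β, -, hβ⟩ := not_not.mp hta
  have hz' : h z ∈ (mapAtom (fun d => root (some d)) β).2 := hβ ▸ List.mem_map_of_mem hz
  obtain ⟨d, -, hd⟩ := List.mem_map.mp hz'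
  exact ⟨d, hd.symm⟩

lemma rep_spec {ro : Option D} (H : ∃ z ∈ varsIn s, h z = root ro) :
    rep q sg s h ro ∈ varsIn s ∧ h (rep q sg s h ro) = root ro := by
  rw [rep, dif_pos H]
  exact H.choose_spec

include hs in
lemma mem_poolVars_of_mem_varsIn {z : Var} (hz : z ∈ varsIn s) : z ∈ poolVars q sg :=
  let ⟨a, ha, hza⟩ := hz; (hs a ha).2.2 z hza

include hs in
lemma rep_mem_ruleVars (ro : Option D) : rep q sg s h ro ∈ ruleVars q sg := by
  by_cases H : ∃ z ∈ varsIn s, h z = root ro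
  · exact mem_ruleVars_of_mem_poolVars (mem_poolVars_of_mem_varsIn hs (rep_spec H).1)
  · rw [rep, dif_neg H]
    exact globalVar_mem_ruleVars q sg

include hs in
lemma unify_mem_poolVars {z : Var} (hz : z ∈ varsIn s) : unify q sg s h z ∈ poolVars q sg := by
  unfold unify
  split_ifs with hnil
  · exact mem_poolVars_of_mem_varsIn hs (rep_spec ⟨z, hz, Prod.ext rfl hnil⟩).1
  · exact mem_poolVars_of_mem_varsIn hs hz

include hs in
lemma splitVal_rep (d : D) {ro : Option D} (H : ∃ z ∈ varsIn s, h z = root ro) :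
    splitVal q sg h d (rep q sg s h ro) = ro.getD d := by
  obtain ⟨hmem, hroot⟩ := rep_spec H
  have hne : rep q sg s h ro ≠ globalVar q sg := fun he =>
    globalVar_not_mem_poolVars q sg (he ▸ mem_poolVars_of_mem_varsIn hs hmem)
  rw [splitVal, if_neg hne, hroot]
  rfl

lemma rep_of_not_exists {ro : Option D} (H : ¬ ∃ z ∈ varsIn s, h z = root ro) :
    rep q sg s h ro = globalVar q sg := by
  rw [rep, dif_neg H]

lemma splitVal_globalVar (d : D) : splitVal q sg h d (globalVar q sg) = d := if_pos rfl

include hs in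
lemma splitVal_unify_of_eq_root {w : Var} {d : D} (hw : h w = root (some d)) :
    splitVal q sg h d (unify q sg s h w) = d := by
  have hunify : unify q sg s h w = rep q sg s h (some d) := by
    rw [unify, hw]
    rfl
  by_cases H : ∃ z ∈ varsIn s, h z = root (some d)
  · rw [hunify, splitVal_rep hs d H]
    rfl
  · rw [hunify, rep_of_not_exists H, splitVal_globalVar]

lemma mem_group {ro : Option D} {a : Atom Var} :
    a ∈ group sg I k s h ro ↔ a ∈ s ∧ isTreeAtom sg I h a ∧ rootOf sg I k h a = ro := by
  simp [group]

lemma mem_groups {g : BCQ × Var} :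
    g ∈ groups q sg I k s h ↔ ∃ a ∈ s, isTreeAtom sg I h a ∧
    g = (group sg I k s h (rootOf sg I k h a), rep q sg s h (rootOf sg I k h a)) := by
  simp [groups, eq_comm, and_assoc]

lemma mem_baseAtoms {a : Atom Var} :
    a ∈ baseAtoms sg I s h ↔ a ∈ s ∧ ¬ isTreeAtom sg I h a := by
  simp [baseAtoms]

include hmatch in
lemma fst_eq_of_mem_varsIn_group {ro : Option D} {z : Var}
    (hz : z ∈ varsIn (group sg I k s h ro)) : (h z).1 = ro := by
  obtain ⟨a, ha, hza⟩ := hz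
  obtain ⟨has, hta, rfl⟩ := mem_group.mp ha
  exact fst_eq_rootOf hmatch has hta hza

include hs in
lemma mapAtom_unify_mem_poolAtoms {a : Atom Var} (ha : a ∈ s) :
    mapAtom (unify q sg s h) a ∈ poolAtoms S q sg := by
  refine ⟨(hs a ha).1, by simpa [mapAtom] using (hs a ha).2.1, ?_⟩
  simp only [mapAtom, List.mem_map]
  rintro _ ⟨z, hz, rfl⟩
  exact unify_mem_poolVars hs ⟨a, ha, hz⟩

include hs hmatch in
lemma treeMatch_group (ro : Option D) :
    treeMatch sg I k ro ((group sg I k s h ro).map (mapAtom (unify q sg s h)))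
      (rep q sg s h ro) := by
  refine ⟨Function.update h (rep q sg s h ro) (root ro), by simp, ?_⟩
  simp only [List.mem_map]
  rintro _ ⟨a', ha', rfl⟩
  obtain ⟨ha's, hta', hro'⟩ := mem_group.mp ha'
  obtain ⟨i, c, hc, hfb, hbag⟩ := rootOf_spec hmatch ha's hta'
  refine ⟨i, c, hc.trans hro', hfb, ?_⟩
  rw [mapAtom_comp, mapAtom_congr fun z hz => ?_]
  · exact hbag
  simp only [Function.comp]
  by_cases hnil : (h z).2 = []
  · have hfst := fst_eq_of_mem_varsIn_group hmatch ⟨a', ha', hz⟩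
    rw [unify, if_pos hnil, hfst, Function.update_self]
    exact Prod.ext hfst.symm hnil.symm
  · rw [unify, if_neg hnil, Function.update_of_ne]
    intro he
    by_cases H : ∃ z ∈ varsIn s, h z = root ro
    · exact hnil (by rw [he, (rep_spec H).2]; rfl)
    · exact globalVar_not_mem_poolVars q sg
        (rep_of_not_exists H ▸ he ▸ mem_poolVars_of_mem_varsIn hs ⟨a', ha's, hz⟩)

include hs in
lemma group_mem_judgments (hslen : s.length ≤ maxLen q sg) (ro : Option D) :
    ((group sg I k s h ro).map (mapAtom (unify q sg s h)), rep q sg s h ro) ∈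
      judgments S q sg := by
  refine ⟨⟨?_, ?_⟩, rep_mem_ruleVars hs ro⟩
  · rw [List.length_map]
    exact (List.length_filter_le _ s).trans hslen
  · simp only [List.mem_map]
    rintro _ ⟨a, ha, rfl⟩
    exact mapAtom_unify_mem_poolAtoms hs (mem_group.mp ha).1

include hs in
lemma group_pin_not_mem_of_not_exists {ro : Option D} (H : ¬ ∃ z ∈ varsIn s, h z = root ro) :
    rep q sg s h ro ∉ varsIn ((group sg I k s h ro).map (mapAtom (unify q sg s h))) := by
  rintro ⟨_, ha', hz'⟩
  obtain ⟨a, ha, rfl⟩ := List.mem_map.mp ha'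
  obtain ⟨z, hz, hze⟩ := List.mem_map.mp hz'
  have := unify_mem_poolVars (h := h) hs ⟨a, (mem_group.mp ha).1, hz⟩
  rw [hze, rep_of_not_exists H] at this
  exact globalVar_not_mem_poolVars q sg this

include hs in
lemma baseAtom_image_mem {a : Atom Var} (ha : a ∈ baseAtoms sg I s h) (d : D) :
    mapAtom (splitVal q sg h d) (mapAtom (unify q sg s h) a) ∈ I := by
  obtain ⟨has, hta⟩ := mem_baseAtoms.mp ha
  obtain ⟨β, hβ, hβa⟩ := not_not.mp hta
  suffices mapAtom (splitVal q sg h d) (mapAtom (unify q sg s h) a) = β from this ▸ hβ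
  refine mapAtom_injective root_some_injective ?_
  rw [hβa, mapAtom_comp, mapAtom_comp]
  refine mapAtom_congr fun z hz => ?_
  obtain ⟨d₀, hd₀⟩ := exists_eq_root_of_not_isTreeAtom hta hz
  have hunify : unify q sg s h z = rep q sg s h (some d₀) := by
    rw [unify, hd₀]
    rfl
  simp only [Function.comp, hunify, splitVal_rep hs d ⟨z, ⟨a, has, hz⟩, hd₀⟩, hd₀]
  rfl

include hs hmatch in
lemma splitRule_mem {w : Var} (hsw : (s, w) ∈ judgments S q sg) {d : D}
    (hw : h w = root (some d)) :
    splitRule S s w (unify q sg s h) (baseAtoms sg I s h) (groups q sg I k s h) ∈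
      rewritingProgram S q sg := by
  have hslen : s.length ≤ maxLen q sg := hsw.1.1
  have hwnil : (h w).2 = [] := by rw [hw]; rfl
  refine mem_rewritingProgram.mpr ⟨splitRule_mem_candidateRules hsw ?_ ?_ ?_ ?_ ?_,
    splitRule_sound (fun z => (h z).2 = []) (fun a ha => (hs a ha).1)
      (fun z _ hB => if_neg hB) hwnil ?_ ?_ ?_ ?_⟩
  · rw [unify, if_pos hwnil]
    exact rep_mem_ruleVars hs _
  · exact fun a ha => mapAtom_unify_mem_poolAtoms hs (mem_baseAtoms.mp ha).1
  · exact (List.length_filter_le _ s).trans hslen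
  · intro g hg
    obtain ⟨a, -, -, rfl⟩ := mem_groups.mp hg
    exact group_mem_judgments hs hslen _
  · rw [groups, List.length_map]
    exact (List.length_filter_le _ s).trans hslen
  · intro a ha
    by_cases hta : isTreeAtom sg I h a
    · exact Or.inr ⟨_, mem_groups.mpr ⟨a, ha, hta, rfl⟩, mem_group.mpr ⟨ha, hta, rfl⟩⟩
    · exact Or.inl (mem_baseAtoms.mpr ⟨ha, hta⟩)
  · intro a ha
    obtain ⟨has, hta⟩ := mem_baseAtoms.mp ha
    refine ⟨has, fun z hz => ?_⟩
    obtain ⟨d₀, hd₀⟩ := exists_eq_root_of_not_isTreeAtom hta hz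
    show (h z).2 = []
    rw [hd₀]; rfl
  · intro g hg z hz hB
    obtain ⟨a, -, -, rfl⟩ := mem_groups.mp hg
    show unify q sg s h z = _
    rw [unify, if_pos hB, fst_eq_of_mem_varsIn_group hmatch hz]
  · intro z _ g hg g' hg' hz hz'
    obtain ⟨a, -, -, rfl⟩ := mem_groups.mp hg
    obtain ⟨a', -, -, rfl⟩ := mem_groups.mp hg'
    rw [← fst_eq_of_mem_varsIn_group hmatch hz, ← fst_eq_of_mem_varsIn_group hmatch hz']

end Split

variable {sg} in
lemma pin_not_mem_of_pinnedHolds_root_none {D : Type} {I : Inst D} {n : ℕ} {r : BCQ} {v : Var}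
    (h : pinnedHolds (chaseStage sg I n) r v (root none)) : v ∉ varsIn r := by
  obtain ⟨f, hf, hv⟩ := h
  rintro ⟨a, ha, hva⟩
  exact ne_root_none_of_mem_chaseStage (hf a ha) (List.mem_map_of_mem hva) hv

section Completeness

variable {S q sg} {D : Type} {I K : Inst D}
  (hK : ∀ ru ∈ rewritingProgram S q sg, ruleHolds ru K)
include hK

lemma mem_of_repinRule {p : BCQ × Var} (hp : p ∈ judgments S q sg) (hpin : p.2 ∉ varsIn p.1)
    {d' : D} (h : (judgmentSym S p, [d']) ∈ K) (d : D) : (judgmentSym S p, [d]) ∈ K := by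
  have hne : pinVar q sg ≠ globalVar q sg := by simp [pinVar, globalVar]
  let ν : Var → D := fun z => if z = globalVar q sg then d else d'
  have hhead : mapAtom ν (repinRule S q sg p).1 = (judgmentSym S p, [d]) := by
    simp [repinRule, mapAtom, ν]
  refine hhead ▸ hK _ (repinRule_mem hp hpin) ν fun a ha => ?_
  rw [repinRule, List.mem_singleton] at ha
  simpa [ha, mapAtom, ν, hne] using h

lemma judgment_mem_of_treeMatch (hS : ∀ τ ∈ sg, ∀ a ∈ τ.1, a.1 ∈ S) {k : ℕ}
    (IH : ∀ k' < k, ∀ p ∈ judgments S q sg, ∀ d,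
      pinnedHolds (chaseStage sg I k') p.1 p.2 (root (some d)) → (judgmentSym S p, [d]) ∈ K)
    {t : BCQ} {u : Var} (htu : (t, u) ∈ judgments S q sg) {ro : Option D}
    (ht : treeMatch sg I k ro t u) (hne : t ≠ []) {d : D} (hd : ro = some d ∨ ro = none) :
    (judgmentSym S (t, u), [d]) ∈ K := by
  obtain ⟨n, rfl⟩ : ∃ n, k = n + 1 := by
    obtain ⟨a, ha⟩ := List.exists_mem_of_ne_nil t hne
    obtain ⟨_, _, hatoms⟩ := id ht
    obtain ⟨-, -, -, ⟨k', hk', -⟩, -⟩ := hatoms a ha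
    exact Nat.exists_eq_add_one_of_ne_zero (by omega)
  set ctx := {p ∈ judgments S q sg | pinnedHolds (chaseStage sg I n) p.1 p.2 (root ro)}
  have hctx : ctx.Finite := (judgments_finite S q sg).subset (Set.sep_subset _ _)
  refine hK _ (contextRule_mem hS htu (fun γ hγ => (hctx.mem_toFinset.mp hγ).1)
    (fun p hp hpI => hctx.mem_toFinset.mpr ⟨hp, hpI⟩) ht) (fun _ => d) fun a ha => ?_
  simp only [contextRule, List.mem_map, Finset.mem_toList] at ha
  obtain ⟨γ, hγ, rfl⟩ := ha
  obtain ⟨hγJ, hγI⟩ := hctx.mem_toFinset.mp hγ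
  rcases hd with rfl | rfl
  · exact IH n (Nat.lt_succ_self n) γ hγJ d hγI
  · exact IH n (Nat.lt_succ_self n) γ hγJ d
      (hγI.repin (pin_not_mem_of_pinnedHolds_root_none hγI) _)

lemma group_judgment_mem (hS : ∀ τ ∈ sg, ∀ a ∈ τ.1, a.1 ∈ S) {k : ℕ}
    (IH : ∀ k' < k, ∀ p ∈ judgments S q sg, ∀ d,
      pinnedHolds (chaseStage sg I k') p.1 p.2 (root (some d)) → (judgmentSym S p, [d]) ∈ K)
    {s : BCQ} {h : Var → ChaseDom D} (hmatch : ∀ a ∈ s, mapAtom h a ∈ chaseStage sg I k)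
    (hs : ∀ a ∈ s, a ∈ poolAtoms S q sg) (hslen : s.length ≤ maxLen q sg) {ro : Option D}
    {a : Atom Var} (ha : a ∈ group sg I k s h ro) (d : D) :
    (judgmentSym S ((group sg I k s h ro).map (mapAtom (unify q sg s h)), rep q sg s h ro),
      [splitVal q sg h d (rep q sg s h ro)]) ∈ K := by
  have hjudg := group_mem_judgments (I := I) (k := k) (h := h) hs hslen ro
  have hfact := judgment_mem_of_treeMatch hK hS IH hjudg (treeMatch_group hmatch hs ro)
    (by simpa using List.ne_nil_of_mem ha)
    (d := ro.getD d) (by cases ro <;> simp)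
  by_cases H : ∃ z ∈ varsIn s, h z = root ro
  · rwa [splitVal_rep hs d H]
  · have hval : splitVal q sg h d (rep q sg s h ro) = d := by
      rw [rep_of_not_exists H, splitVal_globalVar]
    rw [hval]
    exact mem_of_repinRule hK hjudg (group_pin_not_mem_of_not_exists hs H) hfact d

lemma judgment_mem_of_pinnedHolds (hS : ∀ τ ∈ sg, ∀ a ∈ τ.1, a.1 ∈ S) (hIK : I ⊆ K)
    (k : ℕ) :
    ∀ p ∈ judgments S q sg, ∀ d,
      pinnedHolds (chaseStage sg I k) p.1 p.2 (root (some d)) → (judgmentSym S p, [d]) ∈ K := by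
  induction k using Nat.strong_induction_on with
  | _ k IH =>
  rintro ⟨s, w⟩ hsw d ⟨h, hmatch, hw⟩
  have hs : ∀ a ∈ s, a ∈ poolAtoms S q sg := hsw.1.2
  have hhead : mapAtom (splitVal q sg h d)
      (splitRule S s w (unify q sg s h) (baseAtoms sg I s h) (groups q sg I k s h)).1 =
      (judgmentSym S (s, w), [d]) := by
    simp [splitRule, mapAtom, splitVal_unify_of_eq_root hs hw]
  refine hhead ▸ hK _ (splitRule_mem hmatch hs hsw hw) (splitVal q sg h d) fun a ha => ?_
  simp only [splitRule, List.mem_append, List.mem_map] at ha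
  rcases ha with ⟨a, ha, rfl⟩ | ⟨g, hg, rfl⟩
  · exact hIK (baseAtom_image_mem hs ha d)
  · obtain ⟨a, ha, hta, rfl⟩ := mem_groups.mp hg
    exact group_judgment_mem hK hS IH hmatch hs hsw.1.1 (mem_group.mpr ⟨ha, hta, rfl⟩) d

end Completeness

lemma globalVar_not_mem_varsIn_query : globalVar q sg ∉ varsIn q := fun ⟨_, ha, hza⟩ =>
  globalVar_not_mem_poolVars q sg (mem_poolVars_of_mem_queryAtoms
    (mem_queryAtoms_of_mem_query ha) hza)

lemma not_certain_of_isEmpty {D : Type} [IsEmpty D] {I : Inst D} (hI : overSchema S I) :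
    ¬ certain S sg (fun _ J => bcqHolds q J) I := fun h =>
  let ⟨f, _⟩ := h D id Function.injective_id I hI
    (fun _ ⟨_, ha, he⟩ => by simpa [← he, mapAtom] using ha) fun _ _ f => isEmptyElim (f 0)
  isEmptyElim (f 0)

lemma dlHolds_rewriting_of_certain (hq : bcqOver S q)
    (hsg : ∀ τ ∈ sg, tgdOver S τ ∧ frontierOne τ) {D : Type} {I : Inst D}
    (hI : overSchema S I) (h : certain S sg (fun _ J => bcqHolds q J) I) :
    dlHolds (rewriting S q sg) I := by
  rcases isEmpty_or_nonempty D with hD | hD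
  · exact absurd h (not_certain_of_isEmpty S q sg hI)
  obtain ⟨d⟩ := hD
  refine Set.mem_sInter.mpr fun K ⟨hIK, hK⟩ => ?_
  obtain ⟨f, hf⟩ := h _ _ root_some_injective (chase sg I)
    (chase_overSchema (fun τ hτ => (hsg τ hτ).1.2) hI)
    (fun _ hα => Set.mem_iUnion.mpr ⟨0, hα⟩)
    (sigmaHolds_chase (fun τ hτ => (hsg τ hτ).2) I)
  obtain ⟨k, hk⟩ := exists_chaseStage_of_forall_mem_chase q f hf
  have hq_derived := judgment_mem_of_pinnedHolds hK (fun τ hτ => (hsg τ hτ).1.1) hIK k _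
    (query_mem_judgments S q sg hq) d
    ((show pinnedHolds _ q (globalVar q sg) _ from ⟨f, hk, rfl⟩).repin
      (globalVar_not_mem_varsIn_query q sg) _)
  exact hK _ (goalRule_mem S q sg hq) (fun _ => d) (by simpa [goalRule, mapAtom] using hq_derived)

lemma head_of_mem_rewritingProgram {ru : DatalogRule} (hru : ru ∈ rewritingProgram S q sg) :
    ru.1 = (goalSym S, []) ∨ ∃ p u, ru.1 = (judgmentSym S p, [u]) := by
  rcases (mem_rewritingProgram.mp hru).1.1 with h | ⟨p, -, u, -, h⟩
  exacts [Or.inl h, Or.inr ⟨p, u, h⟩]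

lemma isMDL_rewriting : isMDL (rewriting S q sg) := fun _ hru => by
  rcases head_of_mem_rewritingProgram S q sg hru with h | ⟨p, u, h⟩ <;> simp [h, rewriting]

lemma dlBoolean_rewriting : dlBoolean (rewriting S q sg) := fun _ hru hgoal => by
  rcases head_of_mem_rewritingProgram S q sg hru with h | ⟨p, u, h⟩
  · simp [h]
  · exact absurd (by simpa [h, rewriting] using hgoal) (judgmentSym_ne_goalSym S p)

lemma dlOver_rewriting (hq : bcqOver S q) : dlOver S (rewriting S q sg) := by
  refine ⟨fun ru hru => ⟨?_, fun a ha => ?_⟩, goalRule S q sg, goalRule_mem S q sg hq, rfl⟩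
  · rcases head_of_mem_rewritingProgram S q sg hru with h | ⟨p, u, h⟩ <;> rw [h]
    exacts [goalSym_not_mem S, judgmentSym_not_mem S p]
  · rcases (mem_rewritingProgram.mp hru).1.2.2 a ha with h | ⟨p, hp, u, -, rfl⟩
    · exact Or.inl h.1
    · exact Or.inr ⟨_, selfRule_mem hp, rfl⟩

end

/-- For every Boolean conjunctive query `q` and every finite
set `sg` of frontier-one TGDs (over schema `S`), there is a Monadic Datalog
query `R` that is a certain-answer rewriting of `q` w.r.t. `sg`: for every
instance `I`, `R` holds on `I` iff `I ∧ sg ⊨ q`. -/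
theorem cq_has_mdl_certain_answer_rewriting_over_frontier_one
    (S : Finset RelSym) (q : BCQ) (hq : bcqOver S q)
    (sg : List TGD) (hsg : ∀ τ ∈ sg, tgdOver S τ ∧ frontierOne τ) :
    ∃ R : DatalogQuery, isMDL R ∧ dlOver S R ∧ dlBoolean R ∧
      ∀ (D : Type) (I : Inst D), overSchema S I →
        (dlHolds R I ↔ certain S sg (fun _ J => bcqHolds q J) I) :=
  ⟨rewriting S q sg, isMDL_rewriting S q sg, dlOver_rewriting S q sg hq,
    dlBoolean_rewriting S q sg, fun _ _ hI => ⟨certain_of_dlHolds_rewriting S q sg hI,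
      dlHolds_rewriting_of_certain S q sg hq hsg hI⟩⟩

end MonDetPaper
end

section
/- König-style compactness for UCQ views: assume V is a set of views with UCQ definitions and Q is a Boolean Datalog query. Let J be a countably infinite view-schema instance such that every instance I ∈ BackV_V(J) satisfies Q. Then there is a finite subinstance J⁻ ⊆ J such that every instance I ∈ BackV_V(J⁻) satisfies Q. -/
namespace MonDetPaper

/-! A choice of CQ disjuncts for the facts of `J` is a point of a product of finite discrete
spaces, compact by Tychonoff. Datalog derivations are finite, so every choice already makes `Q`
true on the part of its instance coming from finitely many facts of `J`; these conditions are
open, and a finite subcover of the compact product gives a single finite `J⁻` that works for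
every choice. -/

theorem exists_finset_forall_of_forall_exists_finset {ι : Type*} {X : ι → Type*}
    [∀ i, Finite (X i)] (P : Finset ι → (∀ i, X i) → Prop) (hdep : ∀ s, DependsOn (P s) s)
    (hmono : ∀ x, Monotone fun s => P s x) (hcover : ∀ x, ∃ s, P s x) :
    ∃ s, ∀ x, P s x := by
  let : ∀ i, TopologicalSpace (X i) := fun _ => ⊥
  have : ∀ i, DiscreteTopology (X i) := fun _ => discreteTopology_bot _
  have hopen : ∀ s, IsOpen {x | P s x} := fun s => isOpen_iff_forall_mem_open.2 fun x hx =>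
    ⟨(s : Set ι).pi fun i => {x i}, fun y hy => (hdep s fun i hi => (hy i hi).symm).mp hx,
      isOpen_set_pi s.finite_toSet fun _ _ => isOpen_discrete _, fun _ _ => rfl⟩
  obtain ⟨s, hs⟩ := isCompact_univ.elim_directed_cover _ hopen
    (fun x _ => Set.mem_iUnion.2 (hcover x))
    (directed_of_isDirected_le fun _ _ hst x => hmono x hst)
  exact ⟨s, fun x => hs (Set.mem_univ x)⟩

section Datalog

variable {D : Type} (P : DatalogProgram)

lemma subset_dlFix (I : Inst D) : I ⊆ dlFix P I :=
  fun _ ha => Set.mem_sInter.2 fun _ hK => hK.1 ha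

lemma dlFix_mono {I I' : Inst D} (h : I ⊆ I') : dlFix P I ⊆ dlFix P I' :=
  fun _ ha => Set.mem_sInter.2 fun K hK => Set.mem_sInter.1 ha K ⟨h.trans hK.1, hK.2⟩

lemma ruleHolds_dlFix (I : Inst D) : ∀ r ∈ P, ruleHolds r (dlFix P I) :=
  fun r hr g hbody => Set.mem_sInter.2 fun K hK =>
    hK.2 r hr g fun a ha => Set.mem_sInter.1 (hbody a ha) K hK

lemma dlFix_subset {I W : Inst D} (hI : I ⊆ W) (hW : ∀ r ∈ P, ruleHolds r W) :
    dlFix P I ⊆ W :=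
  fun _ ha => Set.mem_sInter.1 ha W ⟨hI, hW⟩

/-- Compactness of Datalog: the facts derivable from finite subinstances of `I` are closed
under the rules, hence contain the whole fixpoint. -/
lemma exists_finite_subset_mem_dlFix {I : Inst D} {t : Atom D} (ht : t ∈ dlFix P I) :
    ∃ I₀ ⊆ I, I₀.Finite ∧ t ∈ dlFix P I₀ := by
  refine dlFix_subset P (W := {u | ∃ I₀ ⊆ I, I₀.Finite ∧ u ∈ dlFix P I₀})
    (fun u hu => ⟨{u}, Set.singleton_subset_iff.2 hu, Set.finite_singleton u,
      subset_dlFix P _ rfl⟩) ?_ ht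
  intro r hr g hbody
  choose F hFI hFfin hF using fun a : {a // a ∈ r.2} => hbody a.1 a.2
  have : Finite {a // a ∈ r.2} := r.2.finite_toSet.to_subtype
  refine ⟨⋃ a, F a, Set.iUnion_subset hFI, Set.finite_iUnion hFfin,
    ruleHolds_dlFix P _ r hr g fun a ha => ?_⟩
  exact dlFix_mono P (Set.subset_iUnion F ⟨a, ha⟩) (hF ⟨a, ha⟩)

lemma dlHolds_mono {Q : DatalogQuery} {I I' : Inst D} (h : I ⊆ I') :
    dlHolds Q I → dlHolds Q I' :=
  fun hq => dlFix_mono Q.1 h hq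

end Datalog

section BackV

variable {D : Type}

def Admissible (V : UCQViews) (a : Atom D) (q : CQ) : Prop :=
  ∃ vd ∈ V, vd.1 = a.1 ∧ q ∈ vd.2 ∧ q.2.length = a.2.length

instance (V : UCQViews) (a : Atom D) : Finite {q // Admissible V a q} :=
  Set.Finite.to_subtype (s := {q | Admissible V a q}) <|
    (V.flatMap Prod.snd).finite_toSet.subset fun _ ⟨vd, hvd, _, hq, _⟩ =>
      List.mem_flatMap.2 ⟨vd, hvd, hq⟩

def backInst (c : Atom D → CQ) (J : Inst D) : Inst (D ⊕ (Atom D × Var)) :=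
  { b | ∃ a ∈ J, ∃ cc ∈ (c a).1, b = mapAtom (backAssign a (c a)) cc }

lemma mem_backV {V : UCQViews} {J : Inst D} {K : Inst (D ⊕ (Atom D × Var))} :
    K ∈ backV V J ↔ ∃ c : Atom D → CQ, (∀ a ∈ J, Admissible V a (c a)) ∧ K = backInst c J :=
  Iff.rfl

lemma backInst_mono (c : Atom D → CQ) {J J' : Inst D} (h : J ⊆ J') :
    backInst c J ⊆ backInst c J' := by
  rintro b ⟨a, ha, cc, hcc, rfl⟩
  exact ⟨a, h ha, cc, hcc, rfl⟩

lemma backInst_congr {c c' : Atom D → CQ} {J : Inst D} (h : ∀ a ∈ J, c a = c' a) :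
    backInst c J = backInst c' J := by
  ext b
  constructor <;> rintro ⟨a, ha, cc, hcc, rfl⟩
  · exact ⟨a, ha, cc, h a ha ▸ hcc, by rw [h a ha]⟩
  · exact ⟨a, ha, cc, (h a ha).symm ▸ hcc, by rw [h a ha]⟩

lemma exists_finset_dlHolds_backInst {Q : DatalogQuery} {c : Atom D → CQ} {J : Inst D}
    (hQ : dlHolds Q (backInst c J)) :
    ∃ s : Finset J, dlHolds Q (backInst c ((↑) '' (s : Set J))) := by
  obtain ⟨I₀, hI₀, hfin, hQ₀⟩ := exists_finite_subset_mem_dlFix Q.1 hQ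
  have hcover : I₀ ⊆ ⋃ a : J, backInst c {a.1} := fun b hb => by
    obtain ⟨a, ha, cc, hcc, rfl⟩ := hI₀ hb
    exact Set.mem_iUnion.2 ⟨⟨a, ha⟩, a, rfl, cc, hcc, rfl⟩
  obtain ⟨S, hS, hI₀S⟩ := Set.finite_subset_iUnion hfin hcover
  refine ⟨hS.toFinset, dlHolds_mono (hI₀S.trans ?_) hQ₀⟩
  refine Set.iUnion₂_subset fun a ha => backInst_mono c ?_
  simpa using ha

noncomputable def choiceOf {V : UCQViews} {J : Inst D}
    (x : ∀ a : J, {q // Admissible V a.1 q}) : Atom D → CQ :=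
  Function.extend (↑) (fun a => (x a : CQ)) default

variable {V : UCQViews} {J : Inst D}

lemma choiceOf_apply (x : ∀ a : J, {q // Admissible V a.1 q}) (a : J) :
    choiceOf x a = x a :=
  Subtype.val_injective.extend_apply _ _ a

lemma backInst_choiceOf_mem_backV (x : ∀ a : J, {q // Admissible V a.1 q}) :
    backInst (choiceOf x) J ∈ backV V J :=
  mem_backV.2 ⟨_, fun a ha => choiceOf_apply x ⟨a, ha⟩ ▸ (x ⟨a, ha⟩).2, rfl⟩

lemma dependsOn_backInst_choiceOf (s : Finset J) :
    DependsOn (fun x : ∀ a : J, {q // Admissible V a.1 q} =>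
      backInst (choiceOf x) ((↑) '' (s : Set J))) s := by
  intro x y hxy
  refine backInst_congr ?_
  rintro _ ⟨a, ha, rfl⟩
  rw [choiceOf_apply, choiceOf_apply, hxy a ha]

lemma exists_choiceOf_of_mem_backV [∀ a : J, Nonempty {q // Admissible V a.1 q}]
    {s : Finset J} {K : Inst (D ⊕ (Atom D × Var))} (hK : K ∈ backV V ((↑) '' (s : Set J))) :
    ∃ x : ∀ a : J, {q // Admissible V a.1 q}, K = backInst (choiceOf x) ((↑) '' (s : Set J)) := by
  classical
  obtain ⟨c, hc, rfl⟩ := mem_backV.1 hK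
  refine ⟨fun a => if ha : a ∈ s then ⟨c a, hc a ⟨a, ha, rfl⟩⟩ else Classical.arbitrary _,
    backInst_congr ?_⟩
  rintro _ ⟨a, ha, rfl⟩
  rw [choiceOf_apply, dif_pos (Finset.mem_coe.1 ha)]

lemma backV_eq_empty_of_isEmpty {a : Atom D} (ha : a ∈ J)
    [IsEmpty {q // Admissible V a q}] : backV V J = ∅ :=
  Set.eq_empty_of_forall_notMem fun _ hK =>
    let ⟨c, hc, _⟩ := mem_backV.1 hK
    isEmptyElim (⟨c a, hc a ha⟩ : {q // Admissible V a q})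

end BackV

theorem koenig_compactness_ucq_views_general
    (V : UCQViews)
    (Q : DatalogQuery)
    (D : Type) (J : Inst D)
    (h : ∀ K ∈ backV V J, dlHolds Q K) :
    ∃ J' ⊆ J, J'.Finite ∧ ∀ K ∈ backV V J', dlHolds Q K := by
  by_cases hJ : ∀ a : J, Nonempty {q // Admissible V a.1 q}
  · obtain ⟨s, hs⟩ := exists_finset_forall_of_forall_exists_finset
      (fun s x => dlHolds Q (backInst (choiceOf x) ((↑) '' (s : Set J))))
      (fun s x y hxy => congrArg (dlHolds Q) (dependsOn_backInst_choiceOf s hxy))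
      (fun x s t hst => dlHolds_mono (backInst_mono _ (Set.image_mono hst)))
      (fun x => exists_finset_dlHolds_backInst (h _ (backInst_choiceOf_mem_backV x)))
    refine ⟨_, Subtype.coe_image_subset J _, s.finite_toSet.image _, fun K hK => ?_⟩
    obtain ⟨x, rfl⟩ := exists_choiceOf_of_mem_backV hK
    exact hs x
  · obtain ⟨⟨a, ha⟩, hempty⟩ := not_forall.1 hJ
    have := not_nonempty_iff.1 hempty
    refine ⟨{a}, Set.singleton_subset_iff.2 ha, Set.finite_singleton a, ?_⟩
    simp [backV_eq_empty_of_isEmpty (V := V) (Set.mem_singleton a)]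

/-- König-style compactness for UCQ views.
Let `V` be a set of views with UCQ definitions and `Q` a Boolean Datalog
query (over base schema `S`, view symbols in `SV`).  If `J` is a countably
infinite view-schema instance such that every `K ∈ BackV_V(J)` satisfies `Q`,
then there is a finite subinstance `J⁻ ⊆ J` such that every
`K ∈ BackV_V(J⁻)` satisfies `Q`. -/
theorem koenig_compactness_ucq_views
    (S SV : Finset RelSym) (hdisj : Disjoint S SV)
    (V : UCQViews) (hV : ∀ vd ∈ V, vd.1 ∈ SV ∧ ucqOver S vd.2)
    (Q : DatalogQuery) (hQ : dlOver S Q) (hQb : dlBoolean Q)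
    (D : Type) (J : Inst D) (hJc : J.Countable) (hJinf : J.Infinite)
    (hJov : overSchema SV J)
    (h : ∀ K ∈ backV V J, dlHolds Q K) :
    ∃ J' ⊆ J, J'.Finite ∧ ∀ K ∈ backV V J', dlHolds Q K :=
  koenig_compactness_ucq_views_general V Q D J h

end MonDetPaper
end
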